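/- arXiv:1802.04227 — 11 statements merged into one kernel-verified Lean document; each statement's English description precedes it below -/
import Mathlib

section
/- For every integer j ≥ 6 there exists an Erdős-configuration on j points, i.e. a 3-uniform hypergraph S with |V(S)| = j and |S| = j-2 edges such that no proper induced sub-collection is a forbidden configuration (that is, for every vertex subset U with 4 ≤ |U| < j, the number of edges of S contained in U is at most |U| - 3). -/
open Finset

/-- A 3-uniform hypergraph `S` on vertex set `V` is an Erdős-configuration if
`|V| ≥ 4`, `|S| = |V| - 2`, every edge is a 3-subset of `V`, and every vertex
subset `U` with `4 ≤ |U| < |V|` spans at most `|U| - 3` edges. -/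
def IsErdosConfig {α : Type*} [DecidableEq α] (V : Finset α) (S : Finset (Finset α)) : Prop :=
  4 ≤ V.card ∧ S.card = V.card - 2 ∧ (∀ e ∈ S, e ⊆ V ∧ e.card = 3) ∧
  ∀ U ⊆ V, 4 ≤ U.card → U.card < V.card →
    (S.filter (fun e => e ⊆ U)).card ≤ U.card - 3

namespace ErdosCfg

/-- apex pattern around the cycle: `d, a, b, a, b, ...` (no two cyclically
adjacent equal, all three apexes used). Here `a = m`, `b = m+1`, `d = m+2`. -/
def apex (m i : ℕ) : ℕ := if i = 0 then m + 2 else if i % 2 = 1 then m else m + 1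

/-- the cycle edges -/
def E (m i : ℕ) : Finset ℕ := {i, (i + 1) % m, apex m i}

/-- the configuration: a cycle of `m` edges with alternating apexes, plus the
apex triangle. -/
def S (m : ℕ) : Finset (Finset ℕ) :=
  ((range m).image (E m)) ∪ {({m, m + 1, m + 2} : Finset ℕ)}

lemma apex_ge (m i : ℕ) : m ≤ apex m i := by
  unfold apex; split_ifs <;> omega

lemma apex_lt (m i : ℕ) : apex m i < m + 3 := by
  unfold apex; split_ifs <;> omega

lemma mod_succ_eq {m i : ℕ} (hi : i < m) :
    (i + 1) % m = if i + 1 = m then 0 else i + 1 := by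
  split_ifs with h
  · rw [h, Nat.mod_self]
  · exact Nat.mod_eq_of_lt (by omega)

lemma succ_mod_inj {m i i' : ℕ} (hi : i < m) (hi' : i' < m)
    (h : (i + 1) % m = (i' + 1) % m) : i = i' := by
  rw [mod_succ_eq hi, mod_succ_eq hi'] at h
  split_ifs at h <;> omega

lemma apex_ne_succ {m i : ℕ} (hm : 3 ≤ m) (hi : i < m) :
    apex m i ≠ apex m ((i + 1) % m) := by
  rcases eq_or_ne (i + 1) m with h1 | h1
  · rw [mod_succ_eq hi, if_pos h1]
    unfold apex
    split_ifs <;> first | omega | simp_all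
  · rw [mod_succ_eq hi, if_neg h1]
    unfold apex
    split_ifs <;> first | omega | simp_all

lemma E_inj {m i i' : ℕ} (hm : 3 ≤ m) (hi : i < m) (hi' : i' < m)
    (h : E m i = E m i') : i = i' := by
  have h1 : i ∈ E m i' := by rw [← h]; simp [E]
  have h2 : i' ∈ E m i := by rw [h]; simp [E]
  simp only [E, mem_insert, mem_singleton] at h1 h2
  have a1 := apex_ge m i
  have a2 := apex_ge m i'
  rw [mod_succ_eq hi] at h2
  rw [mod_succ_eq hi'] at h1
  split_ifs at h1 h2 <;> omega

lemma E_card {m i : ℕ} (hm : 3 ≤ m) (hi : i < m) : (E m i).card = 3 := by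
  have h1 : (i + 1) % m ≠ i := by rw [mod_succ_eq hi]; split_ifs <;> omega
  have h2 := apex_ge m i
  have h3 : (i + 1) % m < m := Nat.mod_lt _ (by omega)
  rw [E, card_insert_of_notMem (by simp only [mem_insert, mem_singleton]; omega),
    card_insert_of_notMem (by simp only [mem_singleton]; omega), card_singleton]

lemma E_subset {m i : ℕ} (hm : 3 ≤ m) (hi : i < m) : E m i ⊆ range (m + 3) := by
  intro v hv
  simp only [E, mem_insert, mem_singleton] at hv
  have h3 : (i + 1) % m < m := Nat.mod_lt _ (by omega)
  have := apex_lt m i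
  rw [mem_range]
  omega

lemma g_not_mem_image {m : ℕ} (hm : 3 ≤ m) :
    ({m, m + 1, m + 2} : Finset ℕ) ∉ (range m).image (E m) := by
  simp only [mem_image, mem_range]
  rintro ⟨i, hi, h⟩
  have hmem : i ∈ E m i := by simp [E]
  rw [h] at hmem
  simp only [mem_insert, mem_singleton] at hmem
  omega

lemma S_card {m : ℕ} (hm : 3 ≤ m) : (S m).card = m + 1 := by
  unfold S
  rw [card_union_of_disjoint (by rw [disjoint_singleton_right]; exact g_not_mem_image hm),
    card_image_of_injOn (fun i hi i' hi' h =>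
      E_inj hm (by simpa using hi) (by simpa using hi') h),
    card_range, card_singleton]

lemma main_bound {m : ℕ} (hm : 3 ≤ m) (U : Finset ℕ)
    (h4 : 4 ≤ U.card) (hlt : U.card < m + 3) :
    ((S m).filter (fun e => e ⊆ U)).card ≤ U.card - 3 := by
  classical
  set T : Finset ℕ := (range m).filter (fun i => E m i ⊆ U) with hT
  have hTrange : T ⊆ range m := filter_subset _ _
  have hTmem : ∀ i ∈ T, i < m ∧ E m i ⊆ U := by
    intro i hi
    rw [hT, mem_filter, mem_range] at hi
    exact hi
  have hTsubU : T ⊆ U := by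
    intro i hi
    exact (hTmem i hi).2 (by simp [E])
  -- the count
  have hcount : ((S m).filter (fun e => e ⊆ U)).card =
      T.card + if ({m, m + 1, m + 2} : Finset ℕ) ⊆ U then 1 else 0 := by
    unfold S
    rw [filter_union, filter_image,
      card_union_of_disjoint, card_image_of_injOn (fun i hi i' hi' h =>
        E_inj hm (by simp [hT] at hi; omega) (by simp [hT] at hi'; omega) h)]
    · congr 1
      rw [filter_singleton]
      split_ifs <;> simp
    · rw [disjoint_right]
      intro e he
      rw [mem_filter, mem_singleton] at he
      rw [he.1]
      intro hmem
      exact g_not_mem_image hm (image_subset_image (filter_subset _ _) hmem)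
  -- trivial case: T empty
  rcases T.eq_empty_or_nonempty with hTe | ⟨i₀, hi₀⟩
  · rw [hcount, hTe, card_empty]
    split_ifs <;> omega
  -- T nonempty. First, there is i ∈ T with (i+1)%m ∉ T.
  have hex : ∃ i ∈ T, (i + 1) % m ∉ T := by
    by_contra hc
    push_neg at hc
    -- T is closed under cyclic successor, hence T = range m
    have hclosed : ∀ t, (i₀ + t) % m ∈ T := by
      intro t
      induction t with
      | zero => simpa [Nat.mod_eq_of_lt (hTmem i₀ hi₀).1] using hi₀
      | succ n ih =>
          have := hc _ ih
          rwa [Nat.mod_add_mod, Nat.add_assoc] at this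
    have hfull : ∀ r < m, r ∈ T := by
      intro r hr
      have h1 := hclosed (m + r - i₀)
      have hi0m : i₀ < m := (hTmem i₀ hi₀).1
      have h2 : i₀ + (m + r - i₀) = m + r := by omega
      rw [h2, Nat.add_mod_left, Nat.mod_eq_of_lt hr] at h1
      exact h1
    -- then U contains everything, contradicting |U| < m+3
    have hsub : range (m + 3) ⊆ U := by
      intro v hv
      rw [mem_range] at hv
      have e1 := (hTmem 1 (hfull 1 (by omega))).2
      have e2 := (hTmem 2 (hfull 2 (by omega))).2
      have e0 := (hTmem 0 (hfull 0 (by omega))).2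
      have hma : m ∈ U := e1 (by simp [E, apex])
      have hmb : m + 1 ∈ U := e2 (by simp [E, apex])
      have hmd : m + 2 ∈ U := e0 (by simp [E, apex])
      rcases (by omega : v < m ∨ v = m ∨ v = m + 1 ∨ v = m + 2) with h | h | h | h
      · exact hTsubU (hfull v h)
      · rwa [h]
      · rwa [h]
      · rwa [h]
    have := card_le_card hsub
    rw [card_range] at this
    omega
  obtain ⟨i₁, hi₁, hsucc₁⟩ := hex
  -- T together with the successor of i₁ sits inside U ∩ [0,m)
  have hsuccU : (i₁ + 1) % m ∈ U := (hTmem i₁ hi₁).2 (by simp [E])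
  have hT' : insert ((i₁ + 1) % m) T ⊆ U := by
    intro v hv
    rcases mem_insert.1 hv with h | h
    · rwa [h]
    · exact hTsubU h
  have hT'card : (insert ((i₁ + 1) % m) T).card = T.card + 1 :=
    card_insert_of_notMem hsucc₁
  have hT'range : ∀ v ∈ insert ((i₁ + 1) % m) T, v < m := by
    intro v hv
    rcases mem_insert.1 hv with h | h
    · rw [h]; exact Nat.mod_lt _ (by omega)
    · exact (hTmem v h).1
  by_cases hg : ({m, m + 1, m + 2} : Finset ℕ) ⊆ U
  · -- apex triangle inside U: U contains T ∪ {succ} ∪ {m,m+1,m+2}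
    have hsub : insert ((i₁ + 1) % m) T ∪ ({m, m + 1, m + 2} : Finset ℕ) ⊆ U :=
      union_subset hT' hg
    have hdisj : Disjoint (insert ((i₁ + 1) % m) T) ({m, m + 1, m + 2} : Finset ℕ) := by
      rw [disjoint_left]
      intro v hv hv'
      have := hT'range v hv
      simp only [mem_insert, mem_singleton] at hv'
      omega
    have hcard3 : ({m, m + 1, m + 2} : Finset ℕ).card = 3 := by
      rw [card_insert_of_notMem (by simp only [mem_insert, mem_singleton]; omega),
        card_insert_of_notMem (by simp only [mem_singleton]; omega), card_singleton]
    have := card_le_card hsub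
    rw [card_union_of_disjoint hdisj, hT'card, hcard3] at this
    rw [hcount, if_pos hg]
    omega
  · rw [hcount, if_neg hg]
    by_cases htwo : ∃ i ∈ T, ∃ i' ∈ T, apex m i ≠ apex m i'
    · obtain ⟨i, hi, i', hi', hne⟩ := htwo
      have haiU : apex m i ∈ U := (hTmem i hi).2 (by simp [E])
      have hai'U : apex m i' ∈ U := (hTmem i' hi').2 (by simp [E])
      have hsub : insert ((i₁ + 1) % m) T ∪ ({apex m i, apex m i'} : Finset ℕ) ⊆ U := by
        refine union_subset hT' ?_
        intro v hv
        simp only [mem_insert, mem_singleton] at hv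
        rcases hv with h | h
        · rwa [h]
        · rwa [h]
      have hdisj : Disjoint (insert ((i₁ + 1) % m) T) ({apex m i, apex m i'} : Finset ℕ) := by
        rw [disjoint_left]
        intro v hv hv'
        have h1 := hT'range v hv
        have h2 := apex_ge m i
        have h3 := apex_ge m i'
        simp only [mem_insert, mem_singleton] at hv'
        omega
      have hcard2 : ({apex m i, apex m i'} : Finset ℕ).card = 2 := by
        rw [card_insert_of_notMem (by simpa using hne), card_singleton]
      have := card_le_card hsub
      rw [card_union_of_disjoint hdisj, hT'card, hcard2] at this
      omega
    · -- all edges in T have the same apex, so no two adjacent: double up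
      push_neg at htwo
      rcases Nat.lt_or_ge T.card 2 with hk | hk
      · omega
      have hnosucc : ∀ i ∈ T, (i + 1) % m ∉ T := by
        intro i hi hc
        exact apex_ne_succ hm (hTmem i hi).1 (htwo i hi _ hc)
      set T' : Finset ℕ := T.image (fun i => (i + 1) % m) with hT'def
      have hT'cardeq : T'.card = T.card :=
        card_image_of_injOn (fun i hi i' hi' h =>
          succ_mod_inj (hTmem i hi).1 (hTmem i' hi').1 h)
      have hT'subU : T' ⊆ U := by
        intro v hv
        rw [hT'def, mem_image] at hv
        obtain ⟨i, hi, rfl⟩ := hv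
        exact (hTmem i hi).2 (by simp [E])
      have hdisjTT' : Disjoint T T' := by
        rw [disjoint_right]
        intro v hv
        rw [hT'def, mem_image] at hv
        obtain ⟨i, hi, rfl⟩ := hv
        exact hnosucc i hi
      have haU : apex m i₀ ∈ U := (hTmem i₀ hi₀).2 (by simp [E])
      have hsub : (T ∪ T') ∪ {apex m i₀} ⊆ U := by
        refine union_subset (union_subset hTsubU hT'subU) ?_
        intro v hv
        rw [mem_singleton] at hv
        rwa [hv]
      have hdisj2 : Disjoint (T ∪ T') ({apex m i₀} : Finset ℕ) := by
        rw [disjoint_left]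
        intro v hv hv'
        rw [mem_singleton] at hv'
        have h2 := apex_ge m i₀
        rcases mem_union.1 hv with h | h
        · have := (hTmem v h).1; omega
        · rw [hT'def, mem_image] at h
          obtain ⟨i, hi, rfl⟩ := h
          have : (i + 1) % m < m := Nat.mod_lt _ (by omega)
          omega
      have := card_le_card hsub
      rw [card_union_of_disjoint hdisj2, card_union_of_disjoint hdisjTT',
        hT'cardeq, card_singleton] at this
      omega

end ErdosCfg

/-- For every `j ≥ 6` there exists an Erdős-configuration on `j` points. -/
theorem exists_erdos_config (j : ℕ) (hj : 6 ≤ j) :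
    ∃ (V : Finset ℕ) (S : Finset (Finset ℕ)), V.card = j ∧ IsErdosConfig V S := by
  obtain ⟨m, rfl⟩ : ∃ m, j = m + 3 := ⟨j - 3, by omega⟩
  have hm : 3 ≤ m := by omega
  refine ⟨range (m + 3), ErdosCfg.S m, by rw [card_range], ?_, ?_, ?_, ?_⟩
  · rw [card_range]; omega
  · rw [ErdosCfg.S_card hm, card_range]; omega
  · intro e he
    unfold ErdosCfg.S at he
    rcases mem_union.1 he with h | h
    · rw [mem_image] at h
      obtain ⟨i, hi, rfl⟩ := h
      rw [mem_range] at hi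
      exact ⟨ErdosCfg.E_subset hm hi, ErdosCfg.E_card hm hi⟩
    · rw [mem_singleton] at h
      subst h
      constructor
      · intro v hv
        simp only [mem_insert, mem_singleton] at hv
        rw [mem_range]
        omega
      · rw [card_insert_of_notMem (by simp only [mem_insert, mem_singleton]; omega),
          card_insert_of_notMem (by simp only [mem_singleton]; omega), card_singleton]
  · intro U _ h4 hlt
    rw [card_range] at hlt
    exact ErdosCfg.main_bound hm U h4 hlt
end

section
/- Let S₁, S₂ be distinct Erdős-configurations (viewed as 3-graphs) with |V(S₁) ∩ V(S₂)| ≥ 4. Then |S₁ ∪ S₂| ≥ |V(S₁) ∪ V(S₂)| - 1. -/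
open Finset

/-- Two distinct Erdős-configurations sharing at least 4 vertices satisfy
`|S₁ ∪ S₂| ≥ |V(S₁) ∪ V(S₂)| - 1`. -/
theorem erdos_config_overlap_four {α : Type*} [DecidableEq α]
    (V₁ V₂ : Finset α) (S₁ S₂ : Finset (Finset α))
    (h₁ : IsErdosConfig V₁ S₁) (h₂ : IsErdosConfig V₂ S₂) (hne : S₁ ≠ S₂)
    (hcap : 4 ≤ (V₁ ∩ V₂).card) :
    (V₁ ∪ V₂).card - 1 ≤ (S₁ ∪ S₂).card := by
  obtain ⟨hV1, hS1card, hS1e, hS1U⟩ := h₁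
  obtain ⟨hV2, hS2card, hS2e, hS2U⟩ := h₂
  set U : Finset α := V₁ ∩ V₂ with hU
  have hsub2 : S₁ ∩ S₂ ⊆ S₂.filter (fun e => e ⊆ U) := by
    intro e he
    simp only [mem_inter] at he
    refine mem_filter.mpr ⟨he.2, ?_⟩
    exact subset_inter (hS1e e he.1).1 (hS2e e he.2).1
  have hsub1 : S₁ ∩ S₂ ⊆ S₁.filter (fun e => e ⊆ U) := by
    intro e he
    simp only [mem_inter] at he
    refine mem_filter.mpr ⟨he.1, ?_⟩
    exact subset_inter (hS1e e he.1).1 (hS2e e he.2).1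
  have key : (S₁ ∩ S₂).card ≤ U.card - 3 := by
    by_cases hlt2 : U.card < V₂.card
    · exact le_trans (card_le_card hsub2) (hS2U U inter_subset_right hcap hlt2)
    · by_cases hlt1 : U.card < V₁.card
      · exact le_trans (card_le_card hsub1) (hS1U U inter_subset_left hcap hlt1)
      · -- U = V₁ = V₂
        push_neg at hlt1 hlt2
        have hUV1 : U = V₁ := eq_of_subset_of_card_le inter_subset_left hlt1
        have hUV2 : U = V₂ := eq_of_subset_of_card_le inter_subset_right hlt2
        have hstrict : (S₁ ∩ S₂).card < S₁.card := by
          rcases lt_or_eq_of_le (card_le_card (inter_subset_left : S₁ ∩ S₂ ⊆ S₁)) with h | h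
          · exact h
          · exfalso
            have heq : S₁ ∩ S₂ = S₁ := eq_of_subset_of_card_le inter_subset_left h.ge
            have hsub : S₁ ⊆ S₂ := fun e he =>
              (mem_inter.mp (heq.symm ▸ he : e ∈ S₁ ∩ S₂)).2
            have hle : S₂.card ≤ S₁.card := by
              have hv : V₁.card = V₂.card := by rw [← hUV1, ← hUV2]
              omega
            exact hne (eq_of_subset_of_card_le hsub hle)
        have hcards : U.card = V₁.card := by rw [hUV1]
        omega
  have hVcard : (V₁ ∪ V₂).card + U.card = V₁.card + V₂.card :=
    card_union_add_card_inter V₁ V₂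
  have hScard : (S₁ ∪ S₂).card + (S₁ ∩ S₂).card = S₁.card + S₂.card :=
    card_union_add_card_inter S₁ S₂
  have hU1 : U.card ≤ V₁.card := card_le_card inter_subset_left
  have hU2 : U.card ≤ V₂.card := card_le_card inter_subset_right
  omega
end

section
/- Let S be an Erdős-configuration on j points and let S' ⊆ S be a sub-collection of its edges with V(S') = V(S) and |S'| = c. Let U ⊆ V(S) with |U| ≥ 4 and suppose at least a edges of S \ S' are contained in U. Set κ := j - 3 - c - a. Then the extension type (S' - S'[U], U) is max{κ, 0}-balanced, i.e. for all U ⊆ U' ⊆ V(S), the number of edges of S' not contained in U' is at least |V(S) \ U'| - max{κ, 0}. -/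
/-!
For `U' = V` there is nothing to prove. For `U ⊆ U' ⊊ V`, the Erdős condition allows at most
`|U'| - 3` edges of `S` inside `U'`; these include every edge of `S'` inside `U'` and at least `a`
edges of `S \ S'`, so at least `c + a - (|U'| - 3) = |V \ U'| - κ` edges of `S'` leave `U'`.
-/

open Finset

section

variable {α : Type*} [DecidableEq α] {V U U' : Finset α} {S S' : Finset (Finset α)}

theorem IsErdosConfig.card_filter_subset_add_three_le (hS : IsErdosConfig V S) (hUV : U ⊂ V)
    (hU4 : 4 ≤ U.card) : (S.filter (· ⊆ U)).card + 3 ≤ U.card := by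
  have := hS.2.2.2 U hUV.subset hU4 (card_lt_card hUV)
  omega

theorem card_filter_add_card_sdiff_filter (hsub : S' ⊆ S) (p : Finset α → Prop)
    [DecidablePred p] : (S'.filter p).card + ((S \ S').filter p).card = (S.filter p).card := by
  rw [← card_union_of_disjoint (disjoint_sdiff.mono (filter_subset _ _) (filter_subset _ _)),
    ← filter_union, union_sdiff_of_subset hsub]

theorem card_filter_subset_mono (S : Finset (Finset α)) (hUU' : U ⊆ U') :
    (S.filter (· ⊆ U)).card ≤ (S.filter (· ⊆ U')).card :=
  card_le_card (monotone_filter_right _ fun _ _ he => he.trans hUU')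

theorem IsErdosConfig.card_sdiff_add_le (hS : IsErdosConfig V S) (hsub : S' ⊆ S)
    (hU'V : U' ⊂ V) (hU'4 : 4 ≤ U'.card) :
    (V \ U').card + 3 + S'.card + ((S \ S').filter (· ⊆ U')).card ≤
      V.card + (S'.filter (¬ · ⊆ U')).card := by
  have hErdos := hS.card_filter_subset_add_three_le hU'V hU'4
  rw [← card_filter_add_card_sdiff_filter hsub] at hErdos
  have hsplit := card_filter_add_card_filter_not (s := S') (· ⊆ U')
  have hV := card_sdiff_add_card_eq_card hU'V.subset
  omega

end

theorem erdos_config_extension_balanced_general {α : Type*} [DecidableEq α]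
    (V : Finset α) (S S' : Finset (Finset α))
    (hS : IsErdosConfig V S) (hsub : S' ⊆ S)
    (c a : ℕ) (hc : S'.card = c)
    (U : Finset α) (hU4 : 4 ≤ U.card)
    (ha : a ≤ ((S \ S').filter (fun e => e ⊆ U)).card) :
    ∀ U' : Finset α, U ⊆ U' → U' ⊆ V →
      ((V \ U').card : ℤ) - max ((V.card : ℤ) - 3 - c - a) 0 ≤
        ((S'.filter (fun e => ¬ e ⊆ U')).card : ℤ) := by
  intro U' hUU' hU'V
  subst hc
  rcases hU'V.eq_or_ssubset with rfl | hU'V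
  · have hmax := le_max_right ((U'.card : ℤ) - 3 - S'.card - a) 0
    rw [sdiff_self, bot_eq_empty, card_empty]
    omega
  · have hcount := hS.card_sdiff_add_le hsub hU'V (hU4.trans (card_le_card hUU'))
    have hmono := card_filter_subset_mono (S \ S') hUU'
    have hmax := le_max_left ((V.card : ℤ) - 3 - S'.card - a) 0
    omega

/-- Proposition on Erdős-configuration extension analysis: with `S` an Erdős-configuration
on `j = |V|` points, `S' ⊆ S` spanning all of `V` with `|S'| = c`, `U ⊆ V` with `|U| ≥ 4`
containing at least `a` edges of `S \ S'`, and `κ := j - 3 - c - a`, the extension type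
`(S' - S'[U], U)` is `max κ 0`-balanced: for every `U ⊆ U' ⊆ V`, the number of edges of
`S'` not contained in `U'` is at least `|V \ U'| - max κ 0`. -/
theorem erdos_config_extension_balanced {α : Type*} [DecidableEq α]
    (V : Finset α) (S S' : Finset (Finset α))
    (hS : IsErdosConfig V S) (hsub : S' ⊆ S) (hspan : V = S'.sup id)
    (c a : ℕ) (hc : S'.card = c)
    (U : Finset α) (hUV : U ⊆ V) (hU4 : 4 ≤ U.card)
    (ha : a ≤ ((S \ S').filter (fun e => e ⊆ U)).card) :
    ∀ U' : Finset α, U ⊆ U' → U' ⊆ V →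
      ((V \ U').card : ℤ) - max ((V.card : ℤ) - 3 - c - a) 0 ≤
        ((S'.filter (fun e => ¬ e ⊆ U')).card : ℤ) :=
  erdos_config_extension_balanced_general V S S' hS hsub c a hc U hU4 ha
end

section
/- Let S₁, S₂ be distinct Erdős-configurations with a common edge T' ∈ S₁ ∩ S₂, and define the 3-graph H := (S₁ ∪ S₂) - {T'}. Suppose U' ⊆ V(H) = V(S₁) ∪ V(S₂) satisfies |U' ∩ V(S₁)| ≥ 4 and |(U' ∪ V(S₁)) ∩ V(S₂)| ≥ 4. Then the number of edges of H not contained in U' is at least |V(H) \ U'|. -/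
open Finset

lemma erdos_config_aux {α : Type*} [DecidableEq α]
    (V : Finset α) (S : Finset (Finset α)) (h : IsErdosConfig V S)
    (T' : Finset α) (hT : T' ∈ S) (U : Finset α) (hU : U ⊆ V) (h4 : 4 ≤ U.card) :
    (V \ U).card ≤ ((S.erase T').filter (fun e => ¬ e ⊆ U)).card := by
  obtain ⟨hV4, hScard, hedges, hprop⟩ := h
  rcases eq_or_lt_of_le (card_le_card hU) with heq | hlt
  · have : U = V := eq_of_subset_of_card_le hU heq.ge
    simp [this]
  · have hfil : ((S.erase T').filter (fun e => e ⊆ U)).card ≤ U.card - 3 :=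
      le_trans (card_le_card (filter_subset_filter _ (erase_subset _ _)))
        (hprop U hU h4 hlt)
    have hsum := card_filter_add_card_filter_not
      (s := S.erase T') (p := fun e => e ⊆ U)
    have hecard : (S.erase T').card = S.card - 1 := card_erase_of_mem hT
    have hsd : (V \ U).card = V.card - U.card := card_sdiff_of_subset hU
    omega

/-- For distinct Erdős-configurations `S₁, S₂` with a common edge `T'`,
`H := (S₁ ∪ S₂) - {T'}`, and `U' ⊆ V(H)` with `|U' ∩ V(S₁)| ≥ 4` and
`|(U' ∪ V(S₁)) ∩ V(S₂)| ≥ 4`, the number of edges of `H` not contained in `U'`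
is at least `|V(H) \ U'|`. -/
theorem erdos_config_double_count {α : Type*} [DecidableEq α]
    (V₁ V₂ : Finset α) (S₁ S₂ : Finset (Finset α))
    (h₁ : IsErdosConfig V₁ S₁) (h₂ : IsErdosConfig V₂ S₂) (hne : S₁ ≠ S₂)
    (T' : Finset α) (hT'1 : T' ∈ S₁) (hT'2 : T' ∈ S₂)
    (U' : Finset α) (hU' : U' ⊆ V₁ ∪ V₂)
    (h4a : 4 ≤ (U' ∩ V₁).card) (h4b : 4 ≤ ((U' ∪ V₁) ∩ V₂).card) :
    ((V₁ ∪ V₂) \ U').card ≤ (((S₁ ∪ S₂).erase T').filter (fun e => ¬ e ⊆ U')).card := by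
  classical
  set A := (S₁.erase T').filter (fun e => ¬ e ⊆ U') with hA_def
  set B := (S₂.erase T').filter (fun e => ¬ e ⊆ U' ∪ V₁) with hB_def
  have hsub1 : ∀ e ∈ S₁, e ⊆ V₁ := fun e he => (h₁.2.2.1 e he).1
  have hsub2 : ∀ e ∈ S₂, e ⊆ V₂ := fun e he => (h₂.2.2.1 e he).1
  -- bound for A
  have hA : (V₁ \ U').card ≤ A.card := by
    have h1 := erdos_config_aux V₁ S₁ h₁ T' hT'1 (U' ∩ V₁) inter_subset_right h4a
    have heqf : (S₁.erase T').filter (fun e => ¬ e ⊆ U' ∩ V₁) = A := by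
      apply filter_congr
      intro e he
      have hev : e ⊆ V₁ := hsub1 e (mem_of_mem_erase he)
      constructor
      · intro h hc; exact h (subset_inter hc hev)
      · intro h hc; exact h (hc.trans inter_subset_left)
    have hsd : V₁ \ (U' ∩ V₁) = V₁ \ U' := by
      ext x; simp only [mem_sdiff, mem_inter]; tauto
    rw [heqf, hsd] at h1
    exact h1
  -- bound for B
  have hB : (V₂ \ (U' ∪ V₁)).card ≤ B.card := by
    have h2 := erdos_config_aux V₂ S₂ h₂ T' hT'2 ((U' ∪ V₁) ∩ V₂) inter_subset_right h4b
    have heqf : (S₂.erase T').filter (fun e => ¬ e ⊆ (U' ∪ V₁) ∩ V₂) = B := by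
      apply filter_congr
      intro e he
      have hev : e ⊆ V₂ := hsub2 e (mem_of_mem_erase he)
      constructor
      · intro h hc; exact h (subset_inter hc hev)
      · intro h hc; exact h (hc.trans inter_subset_left)
    have hsd : V₂ \ ((U' ∪ V₁) ∩ V₂) = V₂ \ (U' ∪ V₁) := by
      ext x; simp only [mem_sdiff, mem_inter]; tauto
    rw [heqf, hsd] at h2
    exact h2
  -- disjointness
  have hdisj : Disjoint A B := by
    rw [disjoint_left]
    intro e heA heB
    have h1 : e ∈ S₁ := mem_of_mem_erase (mem_of_mem_filter e heA)
    have h2 : ¬ e ⊆ U' ∪ V₁ := (mem_filter.mp heB).2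
    exact h2 ((hsub1 e h1).trans subset_union_right)
  -- A ∪ B is contained in the target filter
  have hUB : A ∪ B ⊆ ((S₁ ∪ S₂).erase T').filter (fun e => ¬ e ⊆ U') := by
    intro e he
    rcases mem_union.mp he with he | he
    · obtain ⟨he1, he2⟩ := mem_filter.mp he
      exact mem_filter.mpr ⟨mem_erase.mpr ⟨(mem_erase.mp he1).1,
        mem_union_left _ (mem_of_mem_erase he1)⟩, he2⟩
    · obtain ⟨he1, he2⟩ := mem_filter.mp he
      refine mem_filter.mpr ⟨mem_erase.mpr ⟨(mem_erase.mp he1).1,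
        mem_union_right _ (mem_of_mem_erase he1)⟩, ?_⟩
      exact fun hc => he2 (hc.trans subset_union_left)
  -- split the vertex difference
  have hsplit : (V₁ ∪ V₂) \ U' = (V₁ \ U') ∪ (V₂ \ (U' ∪ V₁)) := by
    ext x; simp only [mem_sdiff, mem_union]; tauto
  have hvdisj : Disjoint (V₁ \ U') (V₂ \ (U' ∪ V₁)) := by
    rw [disjoint_left]
    intro x hx hx'
    exact (mem_sdiff.mp hx').2 (mem_union_right _ (mem_sdiff.mp hx).1)
  calc ((V₁ ∪ V₂) \ U').card = (V₁ \ U').card + (V₂ \ (U' ∪ V₁)).card := by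
        rw [hsplit, card_union_of_disjoint hvdisj]
    _ ≤ A.card + B.card := Nat.add_le_add hA hB
    _ = (A ∪ B).card := (card_union_of_disjoint hdisj).symm
    _ ≤ _ := card_le_card hUB
end

section
/- Let T₁, T₂, T' be three distinct 3-sets and S₁, S₂ be distinct Erdős-configurations, not both diamonds (an Erdős-configuration with exactly 2 edges on 4 vertices), with T' ∈ S₁ ∩ S₂, T₁ ∈ S₁, T₂ ∈ S₂. Define H := (S₁ ∪ S₂) - {T₁, T₂, T'} and U := T₁ ∪ T₂, and suppose no edge of H is contained in U. Then the extension type (H, U) is 0-balanced: for all U ⊆ U' ⊆ V(H), |H - H[U']| ≥ |V(H) \ U'|. -/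
open Finset

private lemma erdos_filter_ge {α : Type*} [DecidableEq α] {V X : Finset α}
    {S : Finset (Finset α)}
    (h : IsErdosConfig V S) (hX : X ⊆ V) (h4 : 4 ≤ X.card) (hlt : X.card < V.card) :
    V.card - X.card + 1 ≤ (S.filter (fun e => ¬ e ⊆ X)).card := by
  have h1 : (S.filter (fun e => e ⊆ X)).card + (S.filter (fun e => ¬ e ⊆ X)).card = S.card :=
    Finset.card_filter_add_card_filter_not (fun e => e ⊆ X)
  have h2 := h.2.2.2 X hX h4 hlt
  have h3 := h.2.1
  have h0 := h.1
  omega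

private lemma union_card_four {α : Type*} [DecidableEq α] {T T' : Finset α}
    (h3 : T.card = 3) (h3' : T'.card = 3) (hne : T ≠ T') : 4 ≤ (T ∪ T').card := by
  by_contra h
  push_neg at h
  have hle : (T ∪ T').card ≤ T.card := by omega
  have h1 : T = T ∪ T' := Finset.eq_of_subset_of_card_le Finset.subset_union_left hle
  have h2 : T' ⊆ T := by rw [h1]; exact Finset.subset_union_right
  exact hne (Finset.eq_of_subset_of_card_le h2 (by omega)).symm

private lemma erdos_hard_case {α : Type*} [DecidableEq α]
    (V₁ V₂ : Finset α) (S₁ S₂ : Finset (Finset α))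
    (h₁ : IsErdosConfig V₁ S₁) (h₂ : IsErdosConfig V₂ S₂)
    (hnotdiam : ¬ (V₁.card = 4 ∧ V₂.card = 4))
    (T₁ T₂ T' : Finset α) (h12 : T₁ ≠ T₂) (h1' : T₁ ≠ T') (h2' : T₂ ≠ T')
    (hT1 : T₁ ∈ S₁) (hT2 : T₂ ∈ S₂) (hT'1 : T' ∈ S₁) (hT'2 : T' ∈ S₂)
    (U' : Finset α) (hT1U : T₁ ⊆ U') (hUV2 : U' ∩ V₂ = T₂)
    (hB : V₁ ⊆ U' ∪ V₂) :
    1 ≤ ((S₁ \ S₂).filter (fun e => ¬ e ⊆ U')).card := by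
  obtain ⟨hV1c, hS1c, hS1e, hS1b⟩ := h₁
  obtain ⟨hV2c, hS2c, hS2e, hS2b⟩ := h₂
  have hT1V : T₁ ⊆ V₁ := (hS1e T₁ hT1).1
  have hT1c : T₁.card = 3 := (hS1e T₁ hT1).2
  have hT2V : T₂ ⊆ V₂ := (hS2e T₂ hT2).1
  have hT2c : T₂.card = 3 := (hS2e T₂ hT2).2
  have hT'V1 : T' ⊆ V₁ := (hS1e T' hT'1).1
  have hT'V2 : T' ⊆ V₂ := (hS2e T' hT'2).1
  have hT'c : T'.card = 3 := (hS1e T' hT'1).2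
  have hT'nU : ¬ T' ⊆ U' := by
    intro h
    have h1 : T' ⊆ T₂ := by rw [← hUV2]; exact Finset.subset_inter h hT'V2
    exact h2' (Finset.eq_of_subset_of_card_le h1 (by omega)).symm
  have hT1nV2 : ¬ T₁ ⊆ V₂ := by
    intro h
    have h1 : T₁ ⊆ T₂ := by rw [← hUV2]; exact Finset.subset_inter hT1U h
    exact h12 (Finset.eq_of_subset_of_card_le h1 (by omega))
  by_contra hcon
  push_neg at hcon
  have ha : ∀ e ∈ S₁, ¬ e ⊆ U' → e ∈ S₂ := by
    intro e he hnsub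
    by_contra hns
    have hmem : e ∈ (S₁ \ S₂).filter (fun e => ¬ e ⊆ U') := by
      simp only [Finset.mem_filter, Finset.mem_sdiff]
      exact ⟨⟨he, hns⟩, hnsub⟩
    have := Finset.card_pos.2 ⟨e, hmem⟩
    omega
  have hpart : (S₁.filter (fun e => e ⊆ U')).card
      + (S₁.filter (fun e => ¬ e ⊆ U')).card = S₁.card :=
    Finset.card_filter_add_card_filter_not (fun e => e ⊆ U')
  have hWsub : ∀ e ∈ S₁, ¬ e ⊆ U' → e ⊆ V₁ ∩ V₂ := fun e he hn =>
    Finset.subset_inter (hS1e e he).1 (hS2e e (ha e he hn)).1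
  -- facts about p = (U' ∩ V₁).card
  have hpge : 3 ≤ (U' ∩ V₁).card := by
    have h1 : T₁ ⊆ U' ∩ V₁ := Finset.subset_inter hT1U hT1V
    have := Finset.card_le_card h1
    omega
  have hple : (U' ∩ V₁).card ≤ V₁.card := Finset.card_le_card Finset.inter_subset_right
  have hpne : (U' ∩ V₁).card ≠ V₁.card := by
    intro h
    have heq : U' ∩ V₁ = V₁ :=
      Finset.eq_of_subset_of_card_le Finset.inter_subset_right (le_of_eq h.symm)
    apply hT'nU
    intro x hx
    have hx1 : x ∈ U' ∩ V₁ := by rw [heq]; exact hT'V1 hx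
    exact (Finset.mem_inter.1 hx1).1
  -- facts about w = (V₁ ∩ V₂).card
  have hwge : 3 ≤ (V₁ ∩ V₂).card := by
    have h1 : T' ⊆ V₁ ∩ V₂ := Finset.subset_inter hT'V1 hT'V2
    have := Finset.card_le_card h1
    omega
  have hwlt : (V₁ ∩ V₂).card < V₁.card := by
    rcases lt_or_eq_of_le
        (Finset.card_le_card (Finset.inter_subset_left : V₁ ∩ V₂ ⊆ V₁)) with h | h
    · exact h
    · exfalso
      have hW : V₁ ∩ V₂ = V₁ :=
        Finset.eq_of_subset_of_card_le Finset.inter_subset_left (le_of_eq h.symm)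
      apply hT1nV2
      intro x hx
      have hx1 : x ∈ V₁ ∩ V₂ := by rw [hW]; exact hT1V hx
      exact (Finset.mem_inter.1 hx1).2
  -- k = ((V₁ ∩ V₂) ∩ U').card ≤ 3
  have hk : ((V₁ ∩ V₂) ∩ U').card ≤ 3 := by
    have hsub : (V₁ ∩ V₂) ∩ U' ⊆ T₂ := by
      intro x hx
      simp only [Finset.mem_inter] at hx
      rw [← hUV2]
      exact Finset.mem_inter.2 ⟨hx.2, hx.1.2⟩
    have := Finset.card_le_card hsub
    omega
  -- cardinality identity  |V₁| + k = p + w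
  have hid : V₁.card + ((V₁ ∩ V₂) ∩ U').card = (U' ∩ V₁).card + (V₁ ∩ V₂).card := by
    have hU : (U' ∩ V₁) ∪ (V₁ ∩ V₂) = V₁ := by
      ext x
      simp only [Finset.mem_union, Finset.mem_inter]
      constructor
      · rintro (⟨_, h⟩ | ⟨h, _⟩) <;> exact h
      · intro hx
        rcases Finset.mem_union.1 (hB hx) with h | h
        · exact Or.inl ⟨h, hx⟩
        · exact Or.inr ⟨hx, h⟩
    have hI : (U' ∩ V₁) ∩ (V₁ ∩ V₂) = (V₁ ∩ V₂) ∩ U' := by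
      ext x; simp only [Finset.mem_inter]; tauto
    have hcui := Finset.card_union_add_card_inter (U' ∩ V₁) (V₁ ∩ V₂)
    rw [hU, hI] at hcui
    omega
  -- bound on c' when w ≥ 4
  have hc'w : 4 ≤ (V₁ ∩ V₂).card →
      (S₁.filter (fun e => ¬ e ⊆ U')).card ≤ (V₁ ∩ V₂).card - 3 := by
    intro hw4
    calc (S₁.filter (fun e => ¬ e ⊆ U')).card
        ≤ (S₁.filter (fun e => e ⊆ V₁ ∩ V₂)).card := Finset.card_le_card (by
          intro e he
          simp only [Finset.mem_filter] at he ⊢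
          exact ⟨he.1, hWsub e he.1 he.2⟩)
      _ ≤ (V₁ ∩ V₂).card - 3 := hS1b _ Finset.inter_subset_left hw4 hwlt
  -- bound on c' when w = 3
  have hc'3 : (V₁ ∩ V₂).card = 3 → (S₁.filter (fun e => ¬ e ⊆ U')).card ≤ 1 := by
    intro hw3
    have hWT' : V₁ ∩ V₂ = T' :=
      (Finset.eq_of_subset_of_card_le (Finset.subset_inter hT'V1 hT'V2) (by omega)).symm
    calc (S₁.filter (fun e => ¬ e ⊆ U')).card
        ≤ ({T'} : Finset (Finset α)).card := Finset.card_le_card (by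
          intro e he
          simp only [Finset.mem_filter] at he
          simp only [Finset.mem_singleton]
          have h1 : e ⊆ T' := by rw [← hWT']; exact hWsub e he.1 he.2
          have h2 : T'.card ≤ e.card := by
            have := (hS1e e he.1).2
            omega
          exact Finset.eq_of_subset_of_card_le h1 h2)
      _ = 1 := rfl
  by_cases hp4 : 4 ≤ (U' ∩ V₁).card
  · have hf1 : (S₁.filter (fun e => e ⊆ U')).card ≤ (U' ∩ V₁).card - 3 := by
      have hfeq : S₁.filter (fun e => e ⊆ U') = S₁.filter (fun e => e ⊆ U' ∩ V₁) := by
        ext e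
        simp only [Finset.mem_filter]
        constructor
        · rintro ⟨he, h⟩; exact ⟨he, Finset.subset_inter h (hS1e e he).1⟩
        · rintro ⟨he, h⟩; exact ⟨he, h.trans Finset.inter_subset_left⟩
      rw [hfeq]
      exact hS1b _ Finset.inter_subset_right hp4 (by omega)
    by_cases hw4 : 4 ≤ (V₁ ∩ V₂).card
    · have := hc'w hw4
      omega
    · have hw3 : (V₁ ∩ V₂).card = 3 := by omega
      have := hc'3 hw3
      omega
  · -- p = 3, so U' ∩ V₁ = T₁
    have hp3 : (U' ∩ V₁).card = 3 := by omega
    have hUT1 : U' ∩ V₁ = T₁ :=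
      (Finset.eq_of_subset_of_card_le (Finset.subset_inter hT1U hT1V) (by omega)).symm
    have hf1 : (S₁.filter (fun e => e ⊆ U')).card ≤ 1 := by
      calc (S₁.filter (fun e => e ⊆ U')).card
          ≤ ({T₁} : Finset (Finset α)).card := Finset.card_le_card (by
            intro e he
            simp only [Finset.mem_filter] at he
            simp only [Finset.mem_singleton]
            have h1 : e ⊆ T₁ := by
              rw [← hUT1]; exact Finset.subset_inter he.2 (hS1e e he.1).1
            have h2 : T₁.card ≤ e.card := by
              have := (hS1e e he.1).2
              omega
            exact Finset.eq_of_subset_of_card_le h1 h2)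
        _ = 1 := rfl
    by_cases hw4 : 4 ≤ (V₁ ∩ V₂).card
    · have := hc'w hw4
      omega
    · -- diamond case
      have hw3 : (V₁ ∩ V₂).card = 3 := by omega
      have hc1 := hc'3 hw3
      have hV14 : V₁.card = 4 := by omega
      have hV25 : 5 ≤ V₂.card := by
        have h4 : V₂.card ≠ 4 := fun h => hnotdiam ⟨hV14, h⟩
        omega
      have hTT4 : 4 ≤ (T₁ ∪ T').card := union_card_four hT1c hT'c h1'
      have hTTle : (T₁ ∪ T').card ≤ 4 := by
        have := Finset.card_le_card (Finset.union_subset hT1V hT'V1)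
        omega
      have hinter : (T₁ ∩ T').card = 2 := by
        have := Finset.card_union_add_card_inter T₁ T'
        omega
      have hsubT2 : T₁ ∩ T' ⊆ T₂ := by
        intro x hx
        simp only [Finset.mem_inter] at hx
        rw [← hUV2]
        exact Finset.mem_inter.2 ⟨hT1U hx.1, hT'V2 hx.2⟩
      have hT2T' : 2 ≤ (T₂ ∩ T').card := by
        have hsub : T₁ ∩ T' ⊆ T₂ ∩ T' := by
          intro x hx
          simp only [Finset.mem_inter] at hx ⊢
          exact ⟨hsubT2 (Finset.mem_inter.2 hx), hx.2⟩
        have := Finset.card_le_card hsub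
        omega
      have hT2T'lt : (T₂ ∩ T').card < 3 := by
        by_contra h
        push_neg at h
        have heq : T₂ ∩ T' = T₂ :=
          Finset.eq_of_subset_of_card_le Finset.inter_subset_left (by omega)
        have hsub : T₂ ⊆ T' := by rw [← heq]; exact Finset.inter_subset_right
        exact h2' (Finset.eq_of_subset_of_card_le hsub (by omega))
      have hTU2c : (T₂ ∪ T').card = 4 := by
        have := Finset.card_union_add_card_inter T₂ T'
        omega
      have happ := hS2b (T₂ ∪ T') (Finset.union_subset hT2V hT'V2) (by omega) (by omega)
      have h2mem : ({T₂, T'} : Finset (Finset α)) ⊆ S₂.filter (fun e => e ⊆ T₂ ∪ T') := by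
        intro e he
        simp only [Finset.mem_insert, Finset.mem_singleton] at he
        simp only [Finset.mem_filter]
        rcases he with rfl | rfl
        · exact ⟨hT2, Finset.subset_union_left⟩
        · exact ⟨hT'2, Finset.subset_union_right⟩
      have h2card : ({T₂, T'} : Finset (Finset α)).card = 2 := by
        rw [Finset.card_insert_of_notMem (by simp [h2']), Finset.card_singleton]
      have hle2 := Finset.card_le_card h2mem
      omega

/-- For distinct triples `T₁, T₂, T'` and distinct Erdős-configurations `S₁, S₂`,
not both diamonds (i.e. not both on 4 vertices), with `T' ∈ S₁ ∩ S₂`, `T₁ ∈ S₁`,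
`T₂ ∈ S₂`, `H := (S₁ ∪ S₂) - {T₁, T₂, T'}` and `U := T₁ ∪ T₂`, if no edge of `H`
lies in `U` then `(H, U)` is `0`-balanced: for all `U ⊆ U' ⊆ V(H)`, the number of
edges of `H` not contained in `U'` is at least `|V(H) \ U'|`. -/
theorem erdos_config_double_extension {α : Type*} [DecidableEq α]
    (V₁ V₂ : Finset α) (S₁ S₂ : Finset (Finset α))
    (h₁ : IsErdosConfig V₁ S₁) (h₂ : IsErdosConfig V₂ S₂) (hne : S₁ ≠ S₂)
    (hnotdiam : ¬ (V₁.card = 4 ∧ V₂.card = 4))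
    (T₁ T₂ T' : Finset α) (h12 : T₁ ≠ T₂) (h1' : T₁ ≠ T') (h2' : T₂ ≠ T')
    (hT1 : T₁ ∈ S₁) (hT2 : T₂ ∈ S₂) (hT'1 : T' ∈ S₁) (hT'2 : T' ∈ S₂)
    (hHU : ∀ e ∈ (S₁ ∪ S₂) \ {T₁, T₂, T'}, ¬ e ⊆ T₁ ∪ T₂) :
    ∀ U' : Finset α, T₁ ∪ T₂ ⊆ U' → U' ⊆ V₁ ∪ V₂ →
      ((V₁ ∪ V₂) \ U').card ≤
        (((S₁ ∪ S₂) \ {T₁, T₂, T'}).filter (fun e => ¬ e ⊆ U')).card := by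
  intro U' hUU' hU'V
  obtain ⟨hV1c, hS1c, hS1e, hS1b⟩ := h₁
  obtain ⟨hV2c, hS2c, hS2e, hS2b⟩ := h₂
  have hT1V : T₁ ⊆ V₁ := (hS1e T₁ hT1).1
  have hT1c : T₁.card = 3 := (hS1e T₁ hT1).2
  have hT2V : T₂ ⊆ V₂ := (hS2e T₂ hT2).1
  have hT2c : T₂.card = 3 := (hS2e T₂ hT2).2
  have hT'V1 : T' ⊆ V₁ := (hS1e T' hT'1).1
  have hT'V2 : T' ⊆ V₂ := (hS2e T' hT'2).1
  have hT'c : T'.card = 3 := (hS1e T' hT'1).2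
  have hT1U : T₁ ⊆ U' := Finset.Subset.trans Finset.subset_union_left hUU'
  have hT2U : T₂ ⊆ U' := Finset.Subset.trans Finset.subset_union_right hUU'
  set a₁ := ((S₁ \ S₂).filter (fun e => ¬ e ⊆ U')).card with ha₁def
  set b₂ := (S₂.filter (fun e => ¬ e ⊆ U')).card with hb₂def
  set r₁ := (V₁ \ (U' ∪ V₂)).card with hr₁def
  set r₂ := (V₂ \ U').card with hr₂def
  -- decomposition of the right-hand side
  have hRset : (V₁ ∪ V₂) \ U' = (V₂ \ U') ∪ (V₁ \ (U' ∪ V₂)) := by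
    ext x
    simp only [Finset.mem_sdiff, Finset.mem_union]
    tauto
  have hRdisj : Disjoint (V₂ \ U') (V₁ \ (U' ∪ V₂)) := by
    simp only [Finset.disjoint_left, Finset.mem_sdiff, Finset.mem_union]
    tauto
  have hR : ((V₁ ∪ V₂) \ U').card = r₂ + r₁ := by
    rw [hRset, Finset.card_union_of_disjoint hRdisj]
  -- splitting the filtered union of S₁ and S₂
  have hUsplit : ((S₁ ∪ S₂).filter (fun e => ¬ e ⊆ U')).card = b₂ + a₁ := by
    rw [hb₂def, ha₁def, ← Finset.card_union_of_disjoint (by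
      simp only [Finset.disjoint_left, Finset.mem_filter, Finset.mem_sdiff]
      tauto)]
    congr 1
    ext e
    simp only [Finset.mem_filter, Finset.mem_union, Finset.mem_sdiff]
    tauto
  have hFcard : b₂ + a₁ ≤ (((S₁ ∪ S₂) \ {T₁, T₂, T'}).filter (fun e => ¬ e ⊆ U')).card
      + (if T' ⊆ U' then 0 else 1) := by
    rw [← hUsplit]
    by_cases hT' : T' ⊆ U'
    · rw [if_pos hT', Nat.add_zero]
      apply Finset.card_le_card
      intro e he
      simp only [Finset.mem_filter, Finset.mem_sdiff, Finset.mem_insert,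
        Finset.mem_singleton] at he ⊢
      refine ⟨⟨he.1, ?_⟩, he.2⟩
      push_neg
      refine ⟨fun h => he.2 (by rw [h]; exact hT1U), fun h => he.2 (by rw [h]; exact hT2U),
        fun h => he.2 (by rw [h]; exact hT')⟩
    · rw [if_neg hT']
      calc ((S₁ ∪ S₂).filter (fun e => ¬ e ⊆ U')).card
          ≤ ((((S₁ ∪ S₂) \ {T₁, T₂, T'}).filter (fun e => ¬ e ⊆ U')) ∪ {T'}).card := by
            apply Finset.card_le_card
            intro e he
            simp only [Finset.mem_filter, Finset.mem_union] at he ⊢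
            by_cases heT' : e = T'
            · exact Or.inr (by simp [heT'])
            · refine Or.inl ⟨?_, he.2⟩
              simp only [Finset.mem_sdiff, Finset.mem_union, Finset.mem_insert,
                Finset.mem_singleton]
              push_neg
              exact ⟨he.1, fun h => absurd (by rw [h]; exact hT1U) he.2,
                fun h => absurd (by rw [h]; exact hT2U) he.2, heT'⟩
        _ ≤ _ + 1 := by
            refine le_trans (Finset.card_union_le _ _) ?_
            simp
  have ht_le : (if T' ⊆ U' then 0 else 1) ≤ 1 := by split <;> omega
  -- q facts
  have hq3 : 3 ≤ (U' ∩ V₂).card := by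
    have h1 : T₂ ⊆ U' ∩ V₂ := Finset.subset_inter hT2U hT2V
    have := Finset.card_le_card h1
    omega
  have hr₂id : r₂ + (U' ∩ V₂).card = V₂.card := by
    rw [hr₂def, Finset.inter_comm]
    exact Finset.card_sdiff_add_card_inter V₂ U'
  have hfilter2 : S₂.filter (fun e => ¬ e ⊆ U') = S₂.filter (fun e => ¬ e ⊆ U' ∩ V₂) := by
    ext e
    simp only [Finset.mem_filter]
    constructor
    · rintro ⟨he, hn⟩
      exact ⟨he, fun hc => hn (hc.trans Finset.inter_subset_left)⟩
    · rintro ⟨he, hn⟩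
      exact ⟨he, fun hc => hn (Finset.subset_inter hc (hS2e e he).1)⟩
  -- global bound r₂ ≤ b₂
  have hb2_ge : r₂ ≤ b₂ := by
    by_cases hV2U : V₂ ⊆ U'
    · have h0 : r₂ = 0 := by
        rw [hr₂def, Finset.card_eq_zero, Finset.sdiff_eq_empty_iff_subset]
        exact hV2U
      omega
    · have hqlt : (U' ∩ V₂).card < V₂.card := by
        by_contra hc
        push_neg at hc
        have heq : U' ∩ V₂ = V₂ :=
          Finset.eq_of_subset_of_card_le Finset.inter_subset_right hc
        apply hV2U
        intro x hx
        have hx1 : x ∈ U' ∩ V₂ := by rw [heq]; exact hx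
        exact (Finset.mem_inter.1 hx1).1
      by_cases hq4 : 4 ≤ (U' ∩ V₂).card
      · have hge := erdos_filter_ge ⟨hV2c, hS2c, hS2e, hS2b⟩
          Finset.inter_subset_right hq4 hqlt
        have hb2' : V₂.card - (U' ∩ V₂).card + 1 ≤ b₂ := by
          rw [hb₂def, hfilter2]; exact hge
        omega
      · have hq3' : (U' ∩ V₂).card = 3 := by omega
        have hUT2 : U' ∩ V₂ = T₂ := (Finset.eq_of_subset_of_card_le
          (Finset.subset_inter hT2U hT2V) (by omega)).symm
        have hf2 : (S₂.filter (fun e => e ⊆ U')).card ≤ 1 := by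
          calc (S₂.filter (fun e => e ⊆ U')).card
              ≤ ({T₂} : Finset (Finset α)).card := Finset.card_le_card (by
                intro e he
                simp only [Finset.mem_filter] at he
                simp only [Finset.mem_singleton]
                have hsub : e ⊆ T₂ := by
                  rw [← hUT2]; exact Finset.subset_inter he.2 (hS2e e he.1).1
                have hcle : T₂.card ≤ e.card := by
                  have := (hS2e e he.1).2
                  omega
                exact Finset.eq_of_subset_of_card_le hsub hcle)
            _ = 1 := rfl
        have hpart2 : (S₂.filter (fun e => e ⊆ U')).card + b₂ = S₂.card := by
          rw [hb₂def]
          exact Finset.card_filter_add_card_filter_not (fun e => e ⊆ U')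
        omega
  rw [hR]
  by_cases hB : V₁ ⊆ U' ∪ V₂
  · have hr₁0 : r₁ = 0 := by
      rw [hr₁def, Finset.card_eq_zero, Finset.sdiff_eq_empty_iff_subset]
      exact hB
    by_cases hV2U : V₂ ⊆ U'
    · have hteq : (if T' ⊆ U' then 0 else 1) = 0 := if_pos (hT'V2.trans hV2U)
      have hr₂0 : r₂ = 0 := by
        rw [hr₂def, Finset.card_eq_zero, Finset.sdiff_eq_empty_iff_subset]
        exact hV2U
      omega
    · have hqlt : (U' ∩ V₂).card < V₂.card := by
        by_contra hc
        push_neg at hc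
        have heq : U' ∩ V₂ = V₂ :=
          Finset.eq_of_subset_of_card_le Finset.inter_subset_right hc
        apply hV2U
        intro x hx
        have hx1 : x ∈ U' ∩ V₂ := by rw [heq]; exact hx
        exact (Finset.mem_inter.1 hx1).1
      by_cases hq4 : 4 ≤ (U' ∩ V₂).card
      · have hge := erdos_filter_ge ⟨hV2c, hS2c, hS2e, hS2b⟩
          Finset.inter_subset_right hq4 hqlt
        have hb2' : V₂.card - (U' ∩ V₂).card + 1 ≤ b₂ := by
          rw [hb₂def, hfilter2]; exact hge
        omega
      · have hq3' : (U' ∩ V₂).card = 3 := by omega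
        have hUT2 : U' ∩ V₂ = T₂ := (Finset.eq_of_subset_of_card_le
          (Finset.subset_inter hT2U hT2V) (by omega)).symm
        have ha1 : 1 ≤ a₁ := by
          rw [ha₁def]
          exact erdos_hard_case V₁ V₂ S₁ S₂ ⟨hV1c, hS1c, hS1e, hS1b⟩
            ⟨hV2c, hS2c, hS2e, hS2b⟩ hnotdiam T₁ T₂ T' h12 h1' h2'
            hT1 hT2 hT'1 hT'2 U' hT1U hUT2 hB
        omega
  · -- generic case for S₁ : use U'' = (U' ∪ V₂) ∩ V₁
    have hU''sub : (U' ∪ V₂) ∩ V₁ ⊆ V₁ := Finset.inter_subset_right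
    have hU''4 : 4 ≤ ((U' ∪ V₂) ∩ V₁).card := by
      have h4 : 4 ≤ (T₁ ∪ T').card := union_card_four hT1c hT'c h1'
      have hsub : T₁ ∪ T' ⊆ (U' ∪ V₂) ∩ V₁ :=
        Finset.union_subset
          (Finset.subset_inter (hT1U.trans Finset.subset_union_left) hT1V)
          (Finset.subset_inter (hT'V2.trans Finset.subset_union_right) hT'V1)
      have := Finset.card_le_card hsub
      omega
    have hU''lt : ((U' ∪ V₂) ∩ V₁).card < V₁.card := by
      by_contra hc
      push_neg at hc
      have heq : (U' ∪ V₂) ∩ V₁ = V₁ :=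
        Finset.eq_of_subset_of_card_le hU''sub hc
      apply hB
      intro x hx
      have hx1 : x ∈ (U' ∪ V₂) ∩ V₁ := by rw [heq]; exact hx
      exact (Finset.mem_inter.1 hx1).1
    have hfge := erdos_filter_ge ⟨hV1c, hS1c, hS1e, hS1b⟩ hU''sub hU''4 hU''lt
    have hsub : S₁.filter (fun e => ¬ e ⊆ (U' ∪ V₂) ∩ V₁)
        ⊆ (S₁ \ S₂).filter (fun e => ¬ e ⊆ U') := by
      intro e he
      simp only [Finset.mem_filter, Finset.mem_sdiff] at he ⊢
      have heV : e ⊆ V₁ := (hS1e e he.1).1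
      refine ⟨⟨he.1, fun hc => he.2 ?_⟩, fun hc => he.2 ?_⟩
      · exact Finset.subset_inter
          (fun x hx => Finset.mem_union.2 (Or.inr ((hS2e e hc).1 hx))) heV
      · exact Finset.subset_inter
          (fun x hx => Finset.mem_union.2 (Or.inl (hc hx))) heV
    have ha1ge : V₁.card - ((U' ∪ V₂) ∩ V₁).card + 1 ≤ a₁ := by
      rw [ha₁def]
      exact le_trans hfge (Finset.card_le_card hsub)
    have hr₁id : r₁ + ((U' ∪ V₂) ∩ V₁).card = V₁.card := by
      have hci := Finset.card_sdiff_add_card_inter V₁ (U' ∪ V₂)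
      rw [Finset.inter_comm] at hci
      rw [hr₁def]
      exact hci
    omega
end

section
/- Let S₁, S₂ be distinct Erdős-configurations with distinct edges T ∈ S₁ and T' ∈ S₁ ∩ S₂ such that |V(S₁) ∩ V(S₂)| ≥ 4. Define H := (S₁ ∪ S₂) - {T, T'}. Then the extension type (H, T) is 0-balanced: for all T ⊆ U' ⊆ V(H), |H - H[U']| ≥ |V(H) \ U'|. -/
open Finset

/-- A general bound: for an Erdős-configuration `S` on `V` and any `W ⊆ V` with
`2 ≤ |W|`, the number of edges of `S` inside `W` is at most `|W| - 2`. -/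
lemma erdos_filter_le {α : Type*} [DecidableEq α] {V : Finset α} {S : Finset (Finset α)}
    (h : IsErdosConfig V S) (W : Finset α) (hWV : W ⊆ V) (hW2 : 2 ≤ W.card) :
    (S.filter (fun e => e ⊆ W)).card + 2 ≤ W.card := by
  obtain ⟨hV4, hScard, hEdges, hSub⟩ := h
  by_cases hWV' : W = V
  · subst hWV'
    rw [filter_true_of_mem (fun e he => (hEdges e he).1)]
    omega
  · have hlt : W.card < V.card := card_lt_card (Finset.ssubset_iff_subset_ne.mpr ⟨hWV, hWV'⟩)
    by_cases h4 : 4 ≤ W.card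
    · have := hSub W hWV h4 hlt
      omega
    · by_cases h3 : W.card = 3
      · have hle1 : (S.filter (fun e => e ⊆ W)).card ≤ 1 := by
          refine card_le_one.mpr ?_
          intro e he f hf
          simp only [mem_filter] at he hf
          have he3 := (hEdges e he.1).2
          have hf3 := (hEdges f hf.1).2
          have heW : e = W := eq_of_subset_of_card_le he.2 (by omega)
          have hfW : f = W := eq_of_subset_of_card_le hf.2 (by omega)
          rw [heW, hfW]
        omega
      · have hempty : (S.filter (fun e => e ⊆ W)) = ∅ := by
          refine filter_eq_empty_iff.mpr ?_
          intro e he hew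
          have h3' := (hEdges e he).2
          have := card_le_card hew
          omega
        rw [hempty]
        simp
        omega

/-- For distinct Erdős-configurations `S₁, S₂` with distinct edges `T ∈ S₁` and
`T' ∈ S₁ ∩ S₂`, and `|V(S₁) ∩ V(S₂)| ≥ 4`, the extension type
`(H, T)` with `H := (S₁ ∪ S₂) - {T, T'}` is `0`-balanced: for all
`T ⊆ U' ⊆ V(H)`, the number of edges of `H` not contained in `U'` is at least
`|V(H) \ U'|`. -/
theorem erdos_config_butterfly {α : Type*} [DecidableEq α]
    (V₁ V₂ : Finset α) (S₁ S₂ : Finset (Finset α))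
    (h₁ : IsErdosConfig V₁ S₁) (h₂ : IsErdosConfig V₂ S₂) (hne : S₁ ≠ S₂)
    (T T' : Finset α) (hTT' : T ≠ T')
    (hT : T ∈ S₁) (hT'1 : T' ∈ S₁) (hT'2 : T' ∈ S₂)
    (hcap : 4 ≤ (V₁ ∩ V₂).card) :
    ∀ U' : Finset α, T ⊆ U' → U' ⊆ V₁ ∪ V₂ →
      ((V₁ ∪ V₂) \ U').card ≤
        (((S₁ ∪ S₂) \ {T, T'}).filter (fun e => ¬ e ⊆ U')).card := by
  have hV1c := h₁.1
  have hS1c := h₁.2.1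
  have hS1e := h₁.2.2.1
  have hS1sub := h₁.2.2.2
  have hV2c := h₂.1
  have hS2c := h₂.2.1
  have hS2e := h₂.2.2.1
  have hS2sub := h₂.2.2.2
  have hTV1 : T ⊆ V₁ := (hS1e T hT).1
  have hT3 : T.card = 3 := (hS1e T hT).2
  have hT'V1 : T' ⊆ V₁ := (hS1e T' hT'1).1
  have hT'3 : T'.card = 3 := (hS1e T' hT'1).2
  have hT'V2 : T' ⊆ V₂ := (hS2e T' hT'2).1
  -- common edges lie in the intersection of vertex sets
  have hcomY : ∀ e ∈ S₁ ∩ S₂, e ⊆ V₁ ∩ V₂ := by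
    intro e he; rw [mem_inter] at he
    exact subset_inter (hS1e e he.1).1 (hS2e e he.2).1
  -- the number of common edges is at most |V₁ ∩ V₂| - 3
  have hcm : (S₁ ∩ S₂).card + 3 ≤ (V₁ ∩ V₂).card := by
    by_cases h12 : V₁ ⊆ V₂
    · have hY : V₁ ∩ V₂ = V₁ := inter_eq_left.mpr h12
      rw [hY]
      by_cases h21 : V₂ ⊆ V₁
      · have hVV : V₁ = V₂ := Subset.antisymm h12 h21
        have hSS : S₁ ∩ S₂ ⊂ S₁ := by
          refine Finset.ssubset_iff_subset_ne.mpr ⟨inter_subset_left, ?_⟩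
          intro hEq
          have hsub : S₁ ⊆ S₂ := by
            intro e he
            have he2 : e ∈ S₁ ∩ S₂ := by rw [hEq]; exact he
            exact (mem_inter.mp he2).2
          exact hne (eq_of_subset_of_card_le hsub (by rw [hS1c, hS2c, hVV]))
        have := card_lt_card hSS
        omega
      · have hlt : V₁ ⊂ V₂ := Finset.ssubset_iff_subset_ne.mpr ⟨h12, fun h => h21 (h ▸ subset_rfl)⟩
        have hbound := hS2sub V₁ h12 hV1c (card_lt_card hlt)
        have hsub : S₁ ∩ S₂ ⊆ S₂.filter (fun e => e ⊆ V₁) := by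
          intro e he; rw [mem_inter] at he
          exact mem_filter.mpr ⟨he.2, (hS1e e he.1).1⟩
        have := card_le_card hsub
        omega
    · have hYlt : V₁ ∩ V₂ ⊂ V₁ :=
        Finset.ssubset_iff_subset_ne.mpr ⟨inter_subset_left, fun h => h12 (inter_eq_left.mp h)⟩
      have hbound := hS1sub (V₁ ∩ V₂) inter_subset_left hcap (card_lt_card hYlt)
      have hsub : S₁ ∩ S₂ ⊆ S₁.filter (fun e => e ⊆ V₁ ∩ V₂) :=
        fun e he => mem_filter.mpr ⟨(mem_inter.mp he).1, hcomY e he⟩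
      have := card_le_card hsub
      omega
  intro U' hTU' hU'V
  classical
  -- edge counts
  have hfg1 : (S₁.filter (fun e => e ⊆ U')).card + (S₁.filter (fun e => ¬ e ⊆ U')).card
      = S₁.card := card_filter_add_card_filter_not (fun e => e ⊆ U')
  have hfg2 : (S₂.filter (fun e => e ⊆ U')).card + (S₂.filter (fun e => ¬ e ⊆ U')).card
      = S₂.card := card_filter_add_card_filter_not (fun e => e ⊆ U')
  have hfgc : ((S₁ ∩ S₂).filter (fun e => e ⊆ U')).card
      + ((S₁ ∩ S₂).filter (fun e => ¬ e ⊆ U')).card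
      = (S₁ ∩ S₂).card := card_filter_add_card_filter_not (fun e => e ⊆ U')
  have hgU : ((S₁ ∪ S₂).filter (fun e => ¬ e ⊆ U')).card
      + ((S₁ ∩ S₂).filter (fun e => ¬ e ⊆ U')).card
      = (S₁.filter (fun e => ¬ e ⊆ U')).card + (S₂.filter (fun e => ¬ e ⊆ U')).card := by
    have e1 : (S₁ ∪ S₂).filter (fun e => ¬ e ⊆ U')
        = S₁.filter (fun e => ¬ e ⊆ U') ∪ S₂.filter (fun e => ¬ e ⊆ U') := by
      ext e; simp only [mem_union, mem_filter]; tauto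
    have e2 : (S₁ ∩ S₂).filter (fun e => ¬ e ⊆ U')
        = S₁.filter (fun e => ¬ e ⊆ U') ∩ S₂.filter (fun e => ¬ e ⊆ U') := by
      ext e; simp only [mem_inter, mem_filter]; tauto
    rw [e1, e2]
    exact card_union_add_card_inter _ _
  -- relating the goal RHS to the filter over S₁ ∪ S₂
  have hRH : ((S₁ ∪ S₂) \ {T, T'}).filter (fun e => ¬ e ⊆ U')
      = ((S₁ ∪ S₂).filter (fun e => ¬ e ⊆ U')) \ {T, T'} := by
    ext e
    simp only [mem_filter, mem_sdiff]
    tauto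
  have hRcard : (((S₁ ∪ S₂) \ {T, T'}).filter (fun e => ¬ e ⊆ U')).card
      + (((S₁ ∪ S₂).filter (fun e => ¬ e ⊆ U')) ∩ {T, T'}).card
      = ((S₁ ∪ S₂).filter (fun e => ¬ e ⊆ U')).card := by
    rw [hRH]
    exact card_sdiff_add_card_inter _ _
  have hint_sub : ((S₁ ∪ S₂).filter (fun e => ¬ e ⊆ U')) ∩ {T, T'} ⊆ {T'} := by
    intro e he
    rw [mem_inter, mem_filter] at he
    obtain ⟨⟨_, hnot⟩, hmem⟩ := he
    rcases mem_insert.mp hmem with rfl | h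
    · exact absurd hTU' hnot
    · exact h
  have hi1 : (((S₁ ∪ S₂).filter (fun e => ¬ e ⊆ U')) ∩ {T, T'}).card ≤ 1 := by
    have := card_le_card hint_sub
    simpa using this
  have hi0 : T' ⊆ U' → (((S₁ ∪ S₂).filter (fun e => ¬ e ⊆ U')) ∩ {T, T'}).card = 0 := by
    intro hT'U
    rw [card_eq_zero]
    refine eq_empty_iff_forall_notMem.mpr ?_
    intro e he
    have he' := hint_sub he
    rw [mem_singleton] at he'
    subst he'
    rw [mem_inter, mem_filter] at he
    exact he.1.2 hT'U
  -- vertex counts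
  have hv1 : (V₁ \ U').card + (V₁ ∩ U').card = V₁.card := card_sdiff_add_card_inter V₁ U'
  have hv2 : (V₂ \ U').card + (V₂ ∩ U').card = V₂.card := card_sdiff_add_card_inter V₂ U'
  have hvY : ((V₁ ∩ V₂) \ U').card + ((V₁ ∩ V₂) ∩ U').card = (V₁ ∩ V₂).card :=
    card_sdiff_add_card_inter _ _
  have hvL : ((V₁ ∪ V₂) \ U').card + ((V₁ ∩ V₂) \ U').card
      = (V₁ \ U').card + (V₂ \ U').card := by
    rw [union_sdiff_distrib]
    have heq : (V₁ \ U') ∩ (V₂ \ U') = (V₁ ∩ V₂) \ U' := by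
      ext v; simp only [mem_inter, mem_sdiff]; tauto
    rw [← heq]
    exact card_union_add_card_inter _ _
  have hxb : ((V₁ ∩ V₂) ∩ U').card ≤ (V₂ ∩ U').card :=
    card_le_card (by intro v hv; rw [mem_inter] at *; exact ⟨(mem_inter.mp hv.1).2, hv.2⟩)
  have ha3 : 3 ≤ (V₁ ∩ U').card := by
    have : T ⊆ V₁ ∩ U' := subset_inter hTV1 hTU'
    have := card_le_card this
    omega
  -- edges of S₁ in U' are edges in V₁ ∩ U'
  have hfilter1 : S₁.filter (fun e => e ⊆ U') = S₁.filter (fun e => e ⊆ V₁ ∩ U') := by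
    refine filter_congr ?_
    intro e he
    constructor
    · intro h; exact subset_inter (hS1e e he).1 h
    · intro h; exact h.trans inter_subset_right
  have hfilter2 : S₂.filter (fun e => e ⊆ U') = S₂.filter (fun e => e ⊆ V₂ ∩ U') := by
    refine filter_congr ?_
    intro e he
    constructor
    · intro h; exact subset_inter (hS2e e he).1 h
    · intro h; exact h.trans inter_subset_right
  have hf1a : (S₁.filter (fun e => e ⊆ U')).card + 2 ≤ (V₁ ∩ U').card := by
    rw [hfilter1]
    exact erdos_filter_le h₁ _ inter_subset_left (by omega)
  -- the union trick : f₁ + D ≤ #edges of S₁ inside (V₁ ∩ U') ∪ (V₁ ∩ V₂)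
  have hunion : (S₁.filter (fun e => e ⊆ U')).card
      + ((S₁ ∩ S₂).filter (fun e => ¬ e ⊆ U')).card
      ≤ (S₁.filter (fun e => e ⊆ (V₁ ∩ U') ∪ (V₁ ∩ V₂))).card := by
    have hdisj : Disjoint (S₁.filter (fun e => e ⊆ U'))
        ((S₁ ∩ S₂).filter (fun e => ¬ e ⊆ U')) := by
      refine disjoint_left.mpr ?_
      intro e he1 he2
      rw [mem_filter] at he1 he2
      exact he2.2 he1.2
    have hsub : (S₁.filter (fun e => e ⊆ U')) ∪ ((S₁ ∩ S₂).filter (fun e => ¬ e ⊆ U'))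
        ⊆ S₁.filter (fun e => e ⊆ (V₁ ∩ U') ∪ (V₁ ∩ V₂)) := by
      intro e he
      rcases mem_union.mp he with h | h
      · rw [mem_filter] at h ⊢
        exact ⟨h.1, (subset_inter (hS1e e h.1).1 h.2).trans subset_union_left⟩
      · rw [mem_filter] at h ⊢
        exact ⟨(mem_inter.mp h.1).1, (hcomY e h.1).trans subset_union_right⟩
    calc (S₁.filter (fun e => e ⊆ U')).card + ((S₁ ∩ S₂).filter (fun e => ¬ e ⊆ U')).card
        = ((S₁.filter (fun e => e ⊆ U')) ∪ ((S₁ ∩ S₂).filter (fun e => ¬ e ⊆ U'))).card :=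
          (card_union_of_disjoint hdisj).symm
      _ ≤ _ := card_le_card hsub
  have hWcard : ((V₁ ∩ U') ∪ (V₁ ∩ V₂)).card + ((V₁ ∩ V₂) ∩ U').card
      = (V₁ ∩ U').card + (V₁ ∩ V₂).card := by
    have heq : (V₁ ∩ U') ∩ (V₁ ∩ V₂) = (V₁ ∩ V₂) ∩ U' := by
      ext v; simp only [mem_inter]; tauto
    rw [← heq]
    exact card_union_add_card_inter _ _
  have hDc : ((S₁ ∩ S₂).filter (fun e => ¬ e ⊆ U')).card ≤ (S₁ ∩ S₂).card :=
    card_le_card (filter_subset _ _)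
  -- MAIN CASE ANALYSIS
  by_cases hV1U : V₁ ⊆ U'
  · -- V₁ ⊆ U'
    have hf1full : S₁.filter (fun e => e ⊆ U') = S₁ :=
      filter_true_of_mem (fun e he => ((hS1e e he).1).trans hV1U)
    have hD0 : ((S₁ ∩ S₂).filter (fun e => ¬ e ⊆ U')) = ∅ := by
      refine filter_eq_empty_iff.mpr ?_
      intro e he h
      exact h (((hcomY e he).trans inter_subset_left).trans hV1U)
    have hT'U : T' ⊆ U' := hT'V1.trans hV1U
    have hi := hi0 hT'U
    have hb3 : 3 ≤ (V₂ ∩ U').card := by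
      have : T' ⊆ V₂ ∩ U' := subset_inter hT'V2 hT'U
      have := card_le_card this
      omega
    have hf2b : (S₂.filter (fun e => e ⊆ U')).card + 2 ≤ (V₂ ∩ U').card := by
      rw [hfilter2]
      exact erdos_filter_le h₂ _ inter_subset_left (by omega)
    rw [hf1full] at hfg1 hf1a
    rw [hD0] at hgU hDc hfgc
    simp only [card_empty] at hgU hDc hfgc
    omega
  · by_cases hV2U : V₂ ⊆ U'
    · -- V₂ ⊆ U'
      have hf2full : S₂.filter (fun e => e ⊆ U') = S₂ :=
        filter_true_of_mem (fun e he => ((hS2e e he).1).trans hV2U)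
      have hD0 : ((S₁ ∩ S₂).filter (fun e => ¬ e ⊆ U')) = ∅ := by
        refine filter_eq_empty_iff.mpr ?_
        intro e he h
        exact h (((hcomY e he).trans inter_subset_right).trans hV2U)
      have hT'U : T' ⊆ U' := hT'V2.trans hV2U
      have hi := hi0 hT'U
      have hY0 : (V₁ ∩ V₂) \ U' = ∅ := by
        rw [sdiff_eq_empty_iff_subset]
        exact inter_subset_right.trans hV2U
      have hBfull : V₂ ∩ U' = V₂ := inter_eq_left.mpr hV2U
      have hbfull : (V₂ ∩ U').card = V₂.card := by rw [hBfull]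
      rw [hf2full] at hfg2
      rw [hD0] at hgU hDc hfgc
      simp only [card_empty] at hgU hDc hfgc
      rw [hY0] at hvY hvL
      simp only [card_empty] at hvY hvL
      omega
    · -- both V₁ ⊄ U' and V₂ ⊄ U'
      have hBne : V₂ ∩ U' ≠ V₂ := by
        intro h
        refine hV2U (fun v hv => ?_)
        rw [← h] at hv
        exact (mem_inter.mp hv).2
      by_cases hb2 : (V₂ ∩ U').card ≤ 2
      · -- b ≤ 2 : no S₂-edge inside U'
        have hf20 : S₂.filter (fun e => e ⊆ U') = ∅ := by
          rw [hfilter2]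
          refine filter_eq_empty_iff.mpr ?_
          intro e he h
          have := card_le_card h
          have := (hS2e e he).2
          omega
        rw [hf20] at hfg2
        simp only [card_empty] at hfg2
        omega
      · -- b ≥ 3
        have hb3 : 3 ≤ (V₂ ∩ U').card := by omega
        have hf2b : (S₂.filter (fun e => e ⊆ U')).card + 2 ≤ (V₂ ∩ U').card := by
          rw [hfilter2]
          exact erdos_filter_le h₂ _ inter_subset_left (by omega)
        by_cases hW : (V₁ ∩ U') ∪ (V₁ ∩ V₂) = V₁
        · -- A ∪ Y = V₁
          -- in this case  (V₁ ∩ V₂) \ U' = V₁ \ U'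
          have hlY : (V₁ ∩ V₂) \ U' = V₁ \ U' := by
            ext v
            simp only [mem_sdiff, mem_inter]
            constructor
            · rintro ⟨⟨h1, _⟩, h3⟩; exact ⟨h1, h3⟩
            · rintro ⟨h1, h3⟩
              have hv : v ∈ (V₁ ∩ U') ∪ (V₁ ∩ V₂) := by rw [hW]; exact h1
              rcases mem_union.mp hv with h | h
              · exact absurd (mem_inter.mp h).2 h3
              · exact ⟨mem_inter.mp h, h3⟩
          have hf1D : (S₁.filter (fun e => e ⊆ U')).card
              + ((S₁ ∩ S₂).filter (fun e => ¬ e ⊆ U')).card ≤ S₁.card := by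
            refine le_trans hunion ?_
            rw [hW]
            rw [filter_true_of_mem (fun e he => (hS1e e he).1)]
          rw [hlY] at hvY hvL
          by_cases hT'U : T' ⊆ U'
          · have hi := hi0 hT'U
            omega
          · by_cases hb4 : 4 ≤ (V₂ ∩ U').card
            · have hBlt : (V₂ ∩ U').card < V₂.card :=
                card_lt_card (Finset.ssubset_iff_subset_ne.mpr ⟨inter_subset_left, hBne⟩)
              have hf23 := hS2sub (V₂ ∩ U') inter_subset_left hb4 hBlt
              rw [← hfilter2] at hf23
              omega
            · -- b = 3
              have hb : (V₂ ∩ U').card = 3 := by omega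
              by_cases hBS2 : V₂ ∩ U' ∈ S₂
              · -- f₂ ≤ 1 and we need the finer analysis
                have hf21 : (S₂.filter (fun e => e ⊆ U')).card ≤ 1 := by
                  rw [hfilter2]
                  refine card_le_one.mpr ?_
                  intro e he f hf
                  rw [mem_filter] at he hf
                  have he3 := (hS2e e he.1).2
                  have hf3 := (hS2e f hf.1).2
                  have : e = V₂ ∩ U' := eq_of_subset_of_card_le he.2 (by omega)
                  have : f = V₂ ∩ U' := eq_of_subset_of_card_le hf.2 (by omega)
                  simp_all
                by_cases hYV : V₁ ∩ V₂ = V₁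
                · -- V₁ ⊆ V₂, so  A = B = T
                  have hV12 : V₁ ⊆ V₂ := inter_eq_left.mp hYV
                  have hAB : V₁ ∩ U' ⊆ V₂ ∩ U' := by
                    intro v hv; rw [mem_inter] at *; exact ⟨hV12 hv.1, hv.2⟩
                  have haleb := card_le_card hAB
                  have hTA : T ⊆ V₁ ∩ U' := subset_inter hTV1 hTU'
                  have hAT : T = V₁ ∩ U' := eq_of_subset_of_card_le hTA (by omega)
                  have hABeq : V₁ ∩ U' = V₂ ∩ U' := eq_of_subset_of_card_le hAB (by omega)
                  have hTS2 : T ∈ S₂ := by rw [hAT, hABeq]; exact hBS2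
                  have hfX1 : 1 ≤ ((S₁ ∩ S₂).filter (fun e => e ⊆ U')).card := by
                    refine card_pos.mpr ⟨T, ?_⟩
                    rw [mem_filter, mem_inter]
                    exact ⟨⟨hT, hTS2⟩, hTU'⟩
                  have hf11 : (S₁.filter (fun e => e ⊆ U')).card ≤ 1 := by
                    rw [hfilter1]
                    refine card_le_one.mpr ?_
                    intro e he f hf
                    rw [mem_filter] at he hf
                    have he3 := (hS1e e he.1).2
                    have hf3 := (hS1e f hf.1).2
                    have : e = V₁ ∩ U' := eq_of_subset_of_card_le he.2 (by omega)
                    have : f = V₁ ∩ U' := eq_of_subset_of_card_le hf.2 (by omega)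
                    simp_all
                  have hmj : (V₁ ∩ V₂).card = V₁.card := by rw [hYV]
                  omega
                · -- V₁ ∩ V₂ ⊊ V₁
                  by_cases hx3 : ((V₁ ∩ V₂) ∩ U').card ≤ 2
                  · omega
                  · -- x = 3 so  X = B = V₂ ∩ U' ⊆ V₁ ∩ U'
                    have hXB : (V₁ ∩ V₂) ∩ U' ⊆ V₂ ∩ U' := by
                      intro v hv; rw [mem_inter] at *
                      exact ⟨(mem_inter.mp hv.1).2, hv.2⟩
                    have hXBeq : (V₁ ∩ V₂) ∩ U' = V₂ ∩ U' :=
                      eq_of_subset_of_card_le hXB (by omega)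
                    have hBA : V₂ ∩ U' ⊆ V₁ ∩ U' := by
                      rw [← hXBeq]
                      intro v hv; rw [mem_inter] at *
                      exact ⟨(mem_inter.mp hv.1).1, hv.2⟩
                    by_cases hBS1 : V₂ ∩ U' ∈ S₁
                    · -- B is a common edge inside U'
                      have hfX1 : 1 ≤ ((S₁ ∩ S₂).filter (fun e => e ⊆ U')).card := by
                        refine card_pos.mpr ⟨V₂ ∩ U', ?_⟩
                        rw [mem_filter, mem_inter]
                        exact ⟨⟨hBS1, hBS2⟩, inter_subset_right⟩
                      omega
                    · -- B ∉ S₁ : then T ≠ B, so |A| ≥ 4 and f₁ ≤ a - 3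
                      have hTB : T ≠ V₂ ∩ U' := by
                        intro h; exact hBS1 (h ▸ hT)
                      have hTBsub : T ∪ (V₂ ∩ U') ⊆ V₁ ∩ U' :=
                        union_subset (subset_inter hTV1 hTU') hBA
                      have hBTB : (V₂ ∩ U') ⊂ T ∪ (V₂ ∩ U') := by
                        refine Finset.ssubset_iff_subset_ne.mpr ⟨subset_union_right, ?_⟩
                        intro h
                        have hTsub : T ⊆ V₂ ∩ U' := by
                          intro v hv
                          have : v ∈ T ∪ (V₂ ∩ U') := mem_union_left _ hv
                          rwa [← h] at this
                        exact hTB (eq_of_subset_of_card_le hTsub (by omega))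
                      have ha4 : 4 ≤ (V₁ ∩ U').card := by
                        have h1 := card_lt_card hBTB
                        have h2 := card_le_card hTBsub
                        omega
                      have hAlt : (V₁ ∩ U').card < V₁.card :=
                        card_lt_card (Finset.ssubset_iff_subset_ne.mpr ⟨inter_subset_left,
                          fun h => hV1U (fun v hv => by
                            rw [← h] at hv; exact (mem_inter.mp hv).2)⟩)
                      have hf13 := hS1sub (V₁ ∩ U') inter_subset_left ha4 hAlt
                      rw [← hfilter1] at hf13
                      omega
              · -- B ∉ S₂ : f₂ = 0
                have hf20 : S₂.filter (fun e => e ⊆ U') = ∅ := by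
                  rw [hfilter2]
                  refine filter_eq_empty_iff.mpr ?_
                  intro e he h
                  have he3 := (hS2e e he).2
                  have : e = V₂ ∩ U' := eq_of_subset_of_card_le h (by omega)
                  exact hBS2 (this ▸ he)
                rw [hf20] at hfg2
                simp only [card_empty] at hfg2
                omega
        · -- A ∪ Y ⊊ V₁ : the union trick gives f₁ + D ≤ |A ∪ Y| - 3
          have hWsub : (V₁ ∩ U') ∪ (V₁ ∩ V₂) ⊆ V₁ :=
            union_subset inter_subset_left inter_subset_left
          have hWlt : ((V₁ ∩ U') ∪ (V₁ ∩ V₂)).card < V₁.card :=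
            card_lt_card (Finset.ssubset_iff_subset_ne.mpr ⟨hWsub, hW⟩)
          have hW4 : 4 ≤ ((V₁ ∩ U') ∪ (V₁ ∩ V₂)).card := by
            have hsub2 : (V₁ ∩ V₂) ⊆ (V₁ ∩ U') ∪ (V₁ ∩ V₂) := subset_union_right
            have := card_le_card hsub2
            omega
          have htrick := hS1sub _ hWsub hW4 hWlt
          omega
end

section
/- Let (H, U) be a κ-balanced extension type and e an edge of H. Then (H - H[U ∪ e], U ∪ e) is a κ-balanced extension type, where H[U ∪ e] is the set of edges of H contained in U ∪ e. -/
open Finset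

def IsExtType {α : Type*} [DecidableEq α]
    (VH : Finset α) (H : Finset (Finset α)) (U : Finset α) : Prop :=
  U ⊆ VH ∧ (∀ e ∈ H, e ⊆ VH ∧ e.card = 3) ∧ ∀ e ∈ H, ¬ e ⊆ U

def IsBalanced {α : Type*} [DecidableEq α]
    (VH : Finset α) (H : Finset (Finset α)) (U : Finset α) (κ : ℕ) : Prop :=
  ∀ U' : Finset α, U ⊆ U' → U' ⊆ VH →
    (VH \ U').card - κ ≤ (H.filter (fun e => ¬ e ⊆ U')).card

/-- If `(H, U)` is a `κ`-balanced extension type and `e ∈ H`, then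
`(H - H[U ∪ e], U ∪ e)` is a `κ`-balanced extension type, where `H[U ∪ e]`
denotes the edges of `H` contained in `U ∪ e`. -/
theorem extType_extend_root_balanced {α : Type*} [DecidableEq α]
    (VH : Finset α) (H : Finset (Finset α)) (U : Finset α) (κ : ℕ)
    (hext : IsExtType VH H U) (hbal : IsBalanced VH H U κ)
    (e : Finset α) (he : e ∈ H) :
    IsExtType VH (H.filter (fun f => ¬ f ⊆ U ∪ e)) (U ∪ e) ∧
      IsBalanced VH (H.filter (fun f => ¬ f ⊆ U ∪ e)) (U ∪ e) κ := by
  obtain ⟨hUV, hedges, -⟩ := hext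
  refine ⟨⟨union_subset hUV (hedges e he).1, fun f hf => hedges f (mem_filter.mp hf).1,
    fun f hf => (mem_filter.mp hf).2⟩, fun U' hU hV => ?_⟩
  have key : (H.filter (fun f => ¬ f ⊆ U ∪ e)).filter (fun f => ¬ f ⊆ U') =
      H.filter (fun f => ¬ f ⊆ U') := by
    rw [Finset.filter_filter]
    refine Finset.filter_congr fun f _ => ?_
    constructor
    · exact fun h => h.2
    · exact fun h => ⟨fun h2 => h (h2.trans hU), h⟩
  rw [key]
  exact hbal U' (subset_union_left.trans hU) hV
end

section
/- For all n ≥ j > q > r ≥ 2, every (n, q, r)-Steiner system S contains a (j, κ_{q,r}(j))_{q,r}-configuration, where κ_{q,r}(j) = ⌊(j - r - 1)/(q - r)⌋. -/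
open Finset

private lemma choose_ineq {r q : ℕ} (hr : 2 ≤ r) (hrq : r < q) :
    ∀ u, q ≤ u → (u - r) * q.choose r ≤ (q - r) * u.choose r := by
  intro u
  induction u with
  | zero => intro h; omega
  | succ u ih =>
    intro hu
    rcases Nat.lt_or_ge u q with h | h
    · have hq : u + 1 = q := by omega
      rw [hq, Nat.mul_comm]
    · have h1 := ih h
      have hru : r ≤ u := le_trans hrq.le h
      have hkey : q.choose r ≤ (q - r) * u.choose (r - 1) := by
        have hmono : q.choose (r - 1) ≤ u.choose (r - 1) := Nat.choose_le_choose _ h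
        have hid : q.choose r * r = q.choose (r - 1) * (q - (r - 1)) := by
          have h5 := Nat.choose_succ_right_eq q (r - 1)
          have hr1 : r - 1 + 1 = r := by omega
          rw [hr1] at h5; exact h5
        have h2 : q.choose r ≤ (q - r) * q.choose (r - 1) := by
          have h6 : q - (r - 1) ≤ (q - r) * r := by
            have h7 : (q - r) * 2 ≤ (q - r) * r := Nat.mul_le_mul_left _ hr
            omega
          have h3 : q.choose r * r ≤ (q - r) * q.choose (r - 1) * r := by
            rw [hid]
            calc q.choose (r-1) * (q - (r-1)) ≤ q.choose (r-1) * ((q - r) * r) :=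
                  Nat.mul_le_mul_left _ h6
              _ = (q - r) * q.choose (r - 1) * r := by ring
          exact Nat.le_of_mul_le_mul_right h3 (by omega)
        exact h2.trans (Nat.mul_le_mul_left _ hmono)
      have hsucc : (u + 1).choose r = u.choose r + u.choose (r - 1) := by
        have h8 := Nat.choose_succ_succ u (r - 1)
        simp only [Nat.succ_eq_add_one] at h8
        have hr1 : r - 1 + 1 = r := by omega
        rw [hr1] at h8
        omega
      have hstep : (u + 1 - r) = (u - r) + 1 := by omega
      calc (u + 1 - r) * q.choose r = (u - r) * q.choose r + q.choose r := by rw [hstep]; ring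
        _ ≤ (q - r) * u.choose r + (q - r) * u.choose (r - 1) := Nat.add_le_add h1 hkey
        _ = (q - r) * (u + 1).choose r := by rw [hsucc]; ring

private lemma steiner_pairwise {α : Type*} [DecidableEq α]
    (V : Finset α) (r : ℕ) (S : Finset (Finset α))
    (hSV : ∀ Q ∈ S, Q ⊆ V)
    (hcover : ∀ e ⊆ V, e.card = r → ∃! Q, Q ∈ S ∧ e ⊆ Q) :
    ∀ Q₁ ∈ S, ∀ Q₂ ∈ S, Q₁ ≠ Q₂ → (Q₁ ∩ Q₂).card ≤ r - 1 := by
  intro Q₁ h1 Q₂ h2 hne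
  by_contra h
  push_neg at h
  have hr' : r ≤ (Q₁ ∩ Q₂).card := by omega
  obtain ⟨e, he, hecard⟩ := Finset.exists_subset_card_eq hr'
  have heV : e ⊆ V := (he.trans inter_subset_left).trans (hSV Q₁ h1)
  obtain ⟨Q, -, huniq⟩ := hcover e heV hecard
  have e1 := huniq Q₁ ⟨h1, he.trans inter_subset_left⟩
  have e2 := huniq Q₂ ⟨h2, he.trans inter_subset_right⟩
  exact hne (e1.trans e2.symm)

private lemma build_config {α : Type*} [DecidableEq α]
    (V : Finset α) (q r : ℕ) (hr : 2 ≤ r) (hrq : r < q)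
    (S : Finset (Finset α))
    (hSq : ∀ Q ∈ S, Q ⊆ V ∧ Q.card = q)
    (hcover : ∀ e ⊆ V, e.card = r → ∃! Q, Q ∈ S ∧ e ⊆ Q)
    (κ : ℕ) (hκ : r + κ * (q - r) + 1 ≤ V.card) :
    ∀ i, i ≤ κ → ∃ L, L ⊆ S ∧ L.card = i ∧ (L.sup id).card ≤ r + i * (q - r) + 1 := by
  have hSV : ∀ Q ∈ S, Q ⊆ V := fun Q hQ => (hSq Q hQ).1
  have hpair := steiner_pairwise V r S hSV hcover
  intro i
  induction i with
  | zero =>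
    intro _
    exact ⟨∅, by simp⟩
  | succ i ih =>
    intro hi
    obtain ⟨L, hLS, hLcard, hLspan⟩ := ih (by omega)
    have hQX : ∀ Q ∈ L, Q ⊆ L.sup id := fun Q hQ => Finset.le_sup (f := id) hQ
    have hXV : L.sup id ⊆ V := Finset.sup_le fun Q hQ => (hSq Q (hLS hQ)).1
    have main : ∃ e, e ⊆ V ∧ e.card = r ∧ (∀ Q ∈ L, ¬ e ⊆ Q) ∧
        (L.sup id).card + q ≤ (e ∩ L.sup id).card + (r + (i + 1) * (q - r) + 1) := by
      by_cases hL0 : L = ∅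
      · subst hL0
        obtain ⟨e, heV, her⟩ := Finset.exists_subset_card_eq (show r ≤ V.card by linarith [Nat.zero_le (κ * (q - r))])
        refine ⟨e, heV, her, by simp, ?_⟩
        have h15 : (i + 1) * (q - r) = i * (q - r) + (q - r) := by ring
        have hq' : q - r + r = q := by omega
        rw [h15]
        simp only [Finset.sup_empty, Finset.bot_eq_empty, Finset.card_empty]
        linarith [Nat.zero_le (i * (q - r)), Nat.zero_le ((e ∩ (∅ : Finset α)).card)]
      · by_cases hA : ∃ e, e ⊆ L.sup id ∧ e.card = r ∧ ∀ Q ∈ L, ¬ e ⊆ Q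
        · obtain ⟨e, heX, her, hnot⟩ := hA
          refine ⟨e, heX.trans hXV, her, hnot, ?_⟩
          have h13 : e ⊆ e ∩ L.sup id := subset_inter Subset.rfl heX
          have h14 : r ≤ (e ∩ L.sup id).card := her ▸ card_le_card h13
          have h15 : (i + 1) * (q - r) = i * (q - r) + (q - r) := by ring
          have hq' : q - r + r = q := by omega
          rw [h15]
          linarith [hLspan, h14]
        · push_neg at hA
          obtain ⟨Q₁, hQ₁⟩ := Finset.nonempty_iff_ne_empty.mpr hL0
          have hqu : q ≤ (L.sup id).card := by
            have h0 := card_le_card (hQX Q₁ hQ₁)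
            rwa [(hSq Q₁ (hLS hQ₁)).2] at h0
          have hdisj : ∀ Q₁ ∈ L, ∀ Q₂ ∈ L, Q₁ ≠ Q₂ →
              Disjoint (Q₁.powersetCard r) (Q₂.powersetCard r) := by
            intro P₁ hp1 P₂ hp2 hne
            rw [Finset.disjoint_left]
            intro e he1 he2
            rw [mem_powersetCard] at he1 he2
            have h3 : e ⊆ P₁ ∩ P₂ := subset_inter he1.1 he2.1
            have h4 := card_le_card h3
            have h5 := hpair P₁ (hLS hp1) P₂ (hLS hp2) hne
            omega
          have hbi : (L.sup id).powersetCard r = L.biUnion (fun Q => Q.powersetCard r) := by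
            apply Finset.Subset.antisymm
            · intro e he
              rw [mem_powersetCard] at he
              obtain ⟨Q, hQ, heQ⟩ := hA e he.1 he.2
              exact mem_biUnion.mpr ⟨Q, hQ, mem_powersetCard.mpr ⟨heQ, he.2⟩⟩
            · intro e he
              obtain ⟨Q, hQ, he2⟩ := mem_biUnion.mp he
              rw [mem_powersetCard] at he2 ⊢
              exact ⟨he2.1.trans (hQX Q hQ), he2.2⟩
          have hcount : (L.sup id).card.choose r = i * q.choose r := by
            have h6 := congrArg Finset.card hbi
            rw [card_powersetCard, Finset.card_biUnion hdisj] at h6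
            rw [Finset.sum_congr rfl (fun Q hQ => by
                  rw [card_powersetCard, (hSq Q (hLS hQ)).2])] at h6
            rwa [Finset.sum_const, hLcard, smul_eq_mul] at h6
          have hXle : (L.sup id).card ≤ r + i * (q - r) := by
            by_contra hc
            push_neg at hc
            have h7 := choose_ineq hr hrq (L.sup id).card hqu
            rw [hcount] at h7
            have h8 : (i * (q - r) + 1) * q.choose r ≤ ((L.sup id).card - r) * q.choose r := by
              apply Nat.mul_le_mul_right
              have : r + (i * (q - r) + 1) ≤ (L.sup id).card := by linarith
              omega
            have h10 : 0 < q.choose r := Nat.choose_pos hrq.le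
            have h11 : i * (q - r) * q.choose r + q.choose r ≤ i * (q - r) * q.choose r := by
              calc i * (q - r) * q.choose r + q.choose r
                  = (i * (q - r) + 1) * q.choose r := by ring
                _ ≤ ((L.sup id).card - r) * q.choose r := h8
                _ ≤ (q - r) * (i * q.choose r) := h7
                _ = i * (q - r) * q.choose r := by ring
            linarith
          have hXlt : (L.sup id).card < V.card := by
            have h12 : i * (q - r) ≤ κ * (q - r) := Nat.mul_le_mul_right _ (by omega)
            linarith
          have hnsub : ¬ V ⊆ L.sup id := fun h => absurd (card_le_card h) (by omega)
          obtain ⟨p, hpV, hpX⟩ := Finset.not_subset.mp hnsub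
          obtain ⟨g, hgX, hgcard⟩ := Finset.exists_subset_card_eq
            (show r - 1 ≤ (L.sup id).card by omega)
          have hpg : p ∉ g := fun h => hpX (hgX h)
          refine ⟨insert p g, insert_subset_iff.mpr ⟨hpV, hgX.trans hXV⟩, ?_, ?_, ?_⟩
          · rw [card_insert_of_notMem hpg, hgcard]; omega
          · intro Q hQ hsub
            exact hpX (hQX Q hQ (hsub (mem_insert_self p g)))
          · have h13 : g ⊆ (insert p g) ∩ L.sup id := subset_inter (subset_insert p g) hgX
            have h14 : r - 1 ≤ ((insert p g) ∩ L.sup id).card := hgcard ▸ card_le_card h13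
            have h15 : (i + 1) * (q - r) = i * (q - r) + (q - r) := by ring
            have hq' : q - r + r = q := by omega
            have hr' : r - 1 + 1 = r := by omega
            rw [h15]
            linarith [hXle, h14]
    obtain ⟨e, heV, her, hnot, hbud⟩ := main
    obtain ⟨Q₀, ⟨hQ₀S, heQ₀⟩, -⟩ := hcover e heV her
    have hQ₀L : Q₀ ∉ L := fun h => hnot Q₀ h heQ₀
    refine ⟨insert Q₀ L, insert_subset_iff.mpr ⟨hQ₀S, hLS⟩, ?_, ?_⟩
    · rw [card_insert_of_notMem hQ₀L, hLcard]
    · have hsup : (insert Q₀ L).sup id = Q₀ ∪ L.sup id := by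
        rw [Finset.sup_insert]; rfl
      rw [hsup]
      have h1 : (Q₀ ∪ L.sup id).card + (Q₀ ∩ L.sup id).card
          = Q₀.card + (L.sup id).card := Finset.card_union_add_card_inter _ _
      have h2 : (e ∩ L.sup id).card ≤ (Q₀ ∩ L.sup id).card :=
        card_le_card (inter_subset_inter heQ₀ Subset.rfl)
      have h3 : Q₀.card = q := (hSq Q₀ hQ₀S).2
      linarith [hbud]

/-- Every `(n,q,r)`-Steiner system contains a `(j, κ_{q,r}(j))_{q,r}`-configuration,
where `κ_{q,r}(j) = ⌊(j-r-1)/(q-r)⌋`: a set of `⌊(j-r-1)/(q-r)⌋` of its `q`-sets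
spanning at most `j` points, every two of which meet in at most `r-1` points. -/
theorem steiner_contains_config {α : Type*} [DecidableEq α]
    (V : Finset α) (n q r j : ℕ) (hV : V.card = n)
    (hr : 2 ≤ r) (hrq : r < q) (hqj : q < j) (hjn : j ≤ n)
    (S : Finset (Finset α))
    (hSq : ∀ Q ∈ S, Q ⊆ V ∧ Q.card = q)
    (hcover : ∀ e ⊆ V, e.card = r → ∃! Q, Q ∈ S ∧ e ⊆ Q) :
    ∃ L ⊆ S, L.card = (j - r - 1) / (q - r) ∧ (L.sup id).card ≤ j ∧
      ∀ Q₁ ∈ L, ∀ Q₂ ∈ L, Q₁ ≠ Q₂ → (Q₁ ∩ Q₂).card ≤ r - 1 := by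
  set κ := (j - r - 1) / (q - r) with hκdef
  have h1 : κ * (q - r) ≤ j - r - 1 := Nat.div_mul_le_self _ _
  have h2 : r + (j - r - 1) + 1 = j := by omega
  have hκ : r + κ * (q - r) + 1 ≤ V.card := by
    have h3 : j ≤ V.card := hV ▸ hjn
    linarith
  obtain ⟨L, hLS, hLcard, hLspan⟩ :=
    build_config V q r hr hrq S hSq hcover κ hκ κ le_rfl
  refine ⟨L, hLS, hLcard, by linarith, ?_⟩
  intro Q₁ h1' Q₂ h2' hne
  exact steiner_pairwise V r S (fun Q hQ => (hSq Q hQ).1) hcover Q₁ (hLS h1') Q₂ (hLS h2') hne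
end

section
/- For integers q > r ≥ 2 and x ≥ 1, with j' := (x-1)(q-r) + q + 1, one has x·C(q, r) < C(j', r), where C(a, b) denotes the binomial coefficient. -/
lemma aux_step (n q s : ℕ) (hqn : q ≤ n) :
    ∀ d, n.choose (s+1) + d * q.choose s ≤ (n + d).choose (s+1) := by
  intro d
  induction d with
  | zero => simp
  | succ d ih =>
    have h2 : q.choose s ≤ (n+d).choose s := Nat.choose_le_choose s (by omega)
    have h3 : (n + (d+1)).choose (s+1) = (n+d).choose s + (n+d).choose (s+1) := by
      rw [show n + (d+1) = (n+d)+1 from rfl, Nat.choose_succ_succ]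
    have h4 : n.choose (s+1) + (d+1) * q.choose s
        = (n.choose (s+1) + d * q.choose s) + q.choose s := by ring
    rw [h3, h4]
    omega

lemma aux_mul (q s : ℕ) (hs : 1 ≤ s) (hq : s + 1 < q) :
    q.choose (s+1) ≤ (q - (s+1)) * q.choose s := by
  have h1 : q.choose (s+1) * (s+1) = q.choose s * (q - s) :=
    Nat.choose_succ_right_eq q s
  have hd : q - s = (q - (s+1)) + 1 := by omega
  rw [hd] at h1
  have h2 : (s+1) * q.choose (s+1) ≤ (s+1) * ((q - (s+1)) * q.choose s) := by
    set e := q - (s+1) with he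
    set c := q.choose s with hc'
    have hc : 0 < c := Nat.choose_pos (by omega)
    have hd1 : 1 ≤ e := by omega
    have key : c ≤ s * (e * c) := by
      calc c = 1 * (1 * c) := by ring
      _ ≤ s * (e * c) := Nat.mul_le_mul hs (Nat.mul_le_mul hd1 le_rfl)
    calc (s+1) * q.choose (s+1) = q.choose (s+1) * (s+1) := by ring
      _ = c * (e + 1) := h1
      _ = e * c + c := by ring
      _ ≤ e * c + s * (e * c) := by omega
      _ = (s+1) * (e * c) := by ring
  exact Nat.le_of_mul_le_mul_left h2 (by omega)

/-- For `q > r ≥ 2` and `x ≥ 1`, with `j' = (x-1)(q-r) + q + 1`,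
we have `x * C(q, r) < C(j', r)`. -/
theorem counting_inequality (q r x : ℕ) (hr : 2 ≤ r) (hrq : r < q) (hx : 1 ≤ x) :
    x * Nat.choose q r < Nat.choose ((x - 1) * (q - r) + q + 1) r := by
  obtain ⟨k, rfl⟩ : ∃ k, x = k + 1 := ⟨x - 1, by omega⟩
  obtain ⟨s, rfl⟩ : ∃ s, r = s + 1 := ⟨r - 1, by omega⟩
  simp only [Nat.add_sub_cancel]
  induction k with
  | zero =>
    simp only [Nat.zero_mul, Nat.zero_add, Nat.one_mul]
    rw [Nat.choose_succ_succ]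
    have : 0 < q.choose s := Nat.choose_pos (by omega)
    simp only [Nat.succ_eq_add_one]
    omega
  | succ k ih =>
    have ih' := ih
    set d := q - (s+1) with hd
    have hn : q ≤ k * d + q + 1 := by omega
    have h1 := aux_step (k * d + q + 1) q s hn d
    have h2 := aux_mul q s (by omega) hrq
    have h3 : (k+1) * d + q + 1 = (k * d + q + 1) + d := by ring
    rw [h3]
    have := ih' (by omega)
    nlinarith
end

section
/- For an available triple T at time i: 0 ≤ Σ_{j=4}^{j_max} X_{T,j,j-4}(i) − |T_T(i)| ≤ 2·X_{T,double}(i). -/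
open Finset

/-- An Erdős-configuration (given by its triple set `S`, on point set `S.sup id`)
on at most `jmax` points. -/
def IsSmallErdosConfig {α : Type*} [DecidableEq α] (jmax : ℕ) (S : Finset (Finset α)) : Prop :=
  IsErdosConfig (S.sup id) S ∧ (S.sup id).card ≤ jmax

open scoped Classical in
/-- With `Danger` the set of Erdős-configurations `S` on at most `jmax` points with
`T ∈ S`, all triples of `S - {T}` chosen or available and exactly one available
(so `|Danger| = Σ_{j=4}^{jmax} X_{T,j,j-4}`), `TT` the set of available triples
excluding `T`, and `Pairs` the set of ordered pairs of distinct members of `Danger`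
with the same available triple (so `|Pairs| = 2 X_{T,double}`), we have
`0 ≤ |Danger| - |TT| ≤ |Pairs|`. -/
theorem danger_count {α : Type*} [DecidableEq α]
    (C A : Finset (Finset α)) (jmax : ℕ) (hjmax : 4 ≤ jmax)
    (hdisj : Disjoint A C)
    (hA3 : ∀ T' ∈ A, T'.card = 3) (hC3 : ∀ T' ∈ C, T'.card = 3)
    (T : Finset α) (hTA : T ∈ A)
    (hTavail : ¬ ∃ C' ⊆ C, IsErdosConfig ((insert T C').sup id) (insert T C') ∧
      ((insert T C').sup id).card ≤ jmax) :
    let Danger : Finset (Finset (Finset α)) :=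
      (insert T (A ∪ C)).powerset.filter (fun S =>
        T ∈ S ∧ IsSmallErdosConfig jmax S ∧ S.erase T ⊆ A ∪ C ∧
          ((S.erase T) ∩ A).card = 1)
    let TT : Finset (Finset α) :=
      A.filter (fun T' => ∃ C' ⊆ C, IsSmallErdosConfig jmax ({T, T'} ∪ C'))
    let Pairs : Finset (Finset (Finset α) × Finset (Finset α)) :=
      ((insert T (A ∪ C)).powerset ×ˢ (insert T (A ∪ C)).powerset).filter
        (fun p => p.1 ∈ Danger ∧ p.2 ∈ Danger ∧ p.1 ≠ p.2 ∧
          p.1.erase T ∩ A = p.2.erase T ∩ A)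
    TT.card ≤ Danger.card ∧ Danger.card ≤ TT.card + Pairs.card := by
  classical
  intro Danger TT Pairs
  have hTC : T ∉ C := fun h => Finset.disjoint_left.mp hdisj hTA h
  -- the "available triple" map
  set f : Finset (Finset α) → Finset α := fun S => (S.erase T ∩ A).sup id with hfdef
  -- core construction lemma
  have core : ∀ T' ∈ A, ∀ C' ⊆ C, IsSmallErdosConfig jmax ({T, T'} ∪ C') →
      ({T, T'} ∪ C') ∈ Danger ∧ ({T, T'} ∪ C').erase T ∩ A = {T'} := by
    intro T' hT'A C' hC'sub hsc
    have hTne : T' ≠ T := by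
      rintro rfl
      apply hTavail
      have heq : ({T', T'} ∪ C') = insert T' C' := by
        ext a; simp
      rw [heq] at hsc
      exact ⟨C', hC'sub, hsc.1, hsc.2⟩
    have hTnotin : T ∉ {T'} ∪ C' := by
      simp only [Finset.mem_union, Finset.mem_singleton]
      rintro (rfl | h)
      · exact hTne rfl
      · exact hTC (hC'sub h)
    have hSins : ({T, T'} ∪ C') = insert T ({T'} ∪ C') := by
      rw [show ({T, T'} : Finset (Finset α)) = insert T {T'} from rfl, Finset.insert_union]
    have herase : ({T, T'} ∪ C').erase T = {T'} ∪ C' := by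
      rw [hSins, Finset.erase_insert hTnotin]
    have hinter : ({T, T'} ∪ C').erase T ∩ A = {T'} := by
      rw [herase]
      ext a
      simp only [Finset.mem_inter, Finset.mem_union, Finset.mem_singleton]
      constructor
      · rintro ⟨h1 | h1, h2⟩
        · exact h1
        · exact absurd h2 (fun h => Finset.disjoint_left.mp hdisj h (hC'sub h1))
      · rintro rfl
        exact ⟨Or.inl rfl, hT'A⟩
    refine ⟨Finset.mem_filter.mpr ⟨Finset.mem_powerset.mpr ?_, ?_, hsc, ?_, by
      rw [hinter]; exact Finset.card_singleton T'⟩, hinter⟩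
    · intro a ha
      simp only [Finset.mem_union, Finset.mem_insert, Finset.mem_singleton] at ha ⊢
      rcases ha with (rfl | rfl) | h
      · exact Or.inl rfl
      · exact Or.inr (Or.inl hT'A)
      · exact Or.inr (Or.inr (hC'sub h))
    · simp
    · rw [herase]
      intro a ha
      rcases Finset.mem_union.mp ha with h | h
      · rw [Finset.mem_singleton] at h
        exact Finset.mem_union_left _ (h ▸ hT'A)
      · exact Finset.mem_union_right _ (hC'sub h)
  -- every danger configuration maps to TT
  have hDanger : ∀ S ∈ Danger, f S ∈ TT ∧ S.erase T ∩ A = {f S} := by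
    intro S hS
    have hS' := Finset.mem_filter.mp hS
    obtain ⟨hTS, hsc, hsubAC, hcard⟩ := hS'.2
    have hSsub : S ⊆ insert T (A ∪ C) := Finset.mem_powerset.mp hS'.1
    obtain ⟨T', hT'⟩ := Finset.card_eq_one.mp hcard
    have hfS : f S = T' := by
      rw [hfdef]
      simp only [hT', Finset.sup_singleton, id_eq]
    have hT'mem : T' ∈ S.erase T ∩ A := hT' ▸ Finset.mem_singleton_self T'
    have hT'A : T' ∈ A := (Finset.mem_inter.mp hT'mem).2
    have hT'S : T' ∈ S.erase T := (Finset.mem_inter.mp hT'mem).1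
    refine ⟨?_, by rw [hfS, hT']⟩
    rw [hfS]
    refine Finset.mem_filter.mpr ⟨hT'A, S.erase T ∩ C, Finset.inter_subset_right, ?_⟩
    have hSeq : {T, T'} ∪ (S.erase T ∩ C) = S := by
      ext a
      simp only [Finset.mem_union, Finset.mem_insert, Finset.mem_singleton, Finset.mem_inter]
      constructor
      · rintro ((rfl | rfl) | ⟨h, _⟩)
        · exact hTS
        · exact Finset.mem_of_mem_erase hT'S
        · exact Finset.mem_of_mem_erase h
      · intro haS
        by_cases h : a = T
        · exact Or.inl (Or.inl h)
        · have haE : a ∈ S.erase T := Finset.mem_erase.mpr ⟨h, haS⟩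
          rcases Finset.mem_union.mp (hsubAC haE) with hA' | hC'
          · have : a ∈ S.erase T ∩ A := Finset.mem_inter.mpr ⟨haE, hA'⟩
            rw [hT', Finset.mem_singleton] at this
            exact Or.inl (Or.inr this)
          · exact Or.inr ⟨haE, hC'⟩
    rw [hSeq]
    exact hsc
  have hDpow : ∀ S ∈ Danger, S ∈ (insert T (A ∪ C)).powerset :=
    fun S hS => (Finset.mem_filter.mp hS).1
  constructor
  · -- TT.card ≤ Danger.card
    have hmem : ∀ T' : Finset α, ∃ S, T' ∈ TT → S ∈ Danger ∧ S.erase T ∩ A = {T'} := by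
      intro T'
      by_cases h : T' ∈ TT
      · obtain ⟨hT'A, C', hC'sub, hsc⟩ := Finset.mem_filter.mp h
        exact ⟨{T, T'} ∪ C', fun _ => core T' hT'A C' hC'sub hsc⟩
      · exact ⟨∅, fun h' => absurd h' h⟩
    choose g hg using hmem
    refine Finset.card_le_card_of_injOn g (fun a ha => (hg a ha).1) ?_
    intro a ha b hb hab
    have h1 := (hg a (Finset.mem_coe.mp ha)).2
    have h2 := (hg b (Finset.mem_coe.mp hb)).2
    rw [hab, h2] at h1
    exact (Finset.singleton_injective h1).symm
  · -- Danger.card ≤ TT.card + Pairs.card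
    have hfib : ∀ S ∈ Danger, f S ∈ TT := fun S hS => (hDanger S hS).1
    have hPfib : ∀ p ∈ Pairs, f p.1 ∈ TT := by
      intro p hp
      exact hfib p.1 (Finset.mem_filter.mp hp).2.1
    rw [Finset.card_eq_sum_card_fiberwise hfib,
        Finset.card_eq_sum_card_fiberwise hPfib]
    have hz : ∀ z : ℕ, z ≤ 1 + (z * z - z) := by
      intro z
      cases z with
      | zero => simp
      | succ k =>
        have h1 : (k + 1) * (k + 1) - (k + 1) = (k + 1) * k := by
          have : (k + 1) * (k + 1) = (k + 1) * k + (k + 1) := by ring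
          omega
        rw [h1]
        nlinarith
    calc ∑ T' ∈ TT, (Danger.filter fun S => f S = T').card
        ≤ ∑ T' ∈ TT, (1 + (Pairs.filter fun p => f p.1 = T').card) := by
          refine Finset.sum_le_sum ?_
          intro T' hT'
          set z := (Danger.filter fun S => f S = T').card with hzdef
          have hsub : (Danger.filter fun S => f S = T').offDiag ⊆
              (Pairs.filter fun p => f p.1 = T') := by
            intro p hp
            obtain ⟨hp1, hp2, hpne⟩ := Finset.mem_offDiag.mp hp
            have hp1' := Finset.mem_filter.mp hp1
            have hp2' := Finset.mem_filter.mp hp2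
            refine Finset.mem_filter.mpr ⟨Finset.mem_filter.mpr ⟨?_, hp1'.1, hp2'.1, hpne, ?_⟩,
              hp1'.2⟩
            · exact Finset.mem_product.mpr ⟨hDpow p.1 hp1'.1, hDpow p.2 hp2'.1⟩
            · rw [(hDanger p.1 hp1'.1).2, (hDanger p.2 hp2'.1).2, hp1'.2, hp2'.2]
          have hcard : z * z - z ≤ (Pairs.filter fun p => f p.1 = T').card := by
            have := Finset.card_le_card hsub
            rwa [Finset.offDiag_card] at this
          calc z ≤ 1 + (z * z - z) := hz z
            _ ≤ 1 + (Pairs.filter fun p => f p.1 = T').card := by omega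
      _ = TT.card + ∑ T' ∈ TT, (Pairs.filter fun p => f p.1 = T').card := by
          rw [Finset.sum_add_distrib, Finset.sum_const, smul_eq_mul, mul_one]
end

section
/- Let X(0), X(1), ... be a supermartingale with respect to a filtration F, with |ΔX(i)| ≤ K for all i, and let V(i) := Σ_{j=0}^{i-1} E[(ΔX(j))² | F(j)]. Then for any t, v > 0, the probability that there exists i with X(i) ≥ X(0) + t and V(i) ≤ v is at most exp(−t²/(2(v + Kt))). -/
/-!
Fix `0 ≤ l` with `l K < 1` and put `c = l² / (2 (1 - l K))`. For `|x| ≤ K` one has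
`exp (l x) ≤ 1 + l x + c x²`; conditioning on `ℱ i` and using `E[ΔX i | ℱ i] ≤ 0` gives
`E[exp (l ΔX i) | ℱ i] ≤ 1 + c E[(ΔX i)² | ℱ i] ≤ exp (c E[(ΔX i)² | ℱ i])`, so
`Z i = exp (l (X i - X 0) - c V i)` is a positive supermartingale with `Z 0 = 1`.
On the event in question `Z` reaches `exp (l t - c v)`, which by Ville's maximal inequality has
probability at most `exp (-(l t - c v))`; the choice `l = t / (v + K t)` gives
`l t - c v = t² / (2 (v + K t))`.
-/

open Real

lemma Real.exp_le_one_add_add_sq_div_two {y : ℝ} (hy : y ≤ 0) :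
    exp y ≤ 1 + y + y ^ 2 / 2 := by
  have hderiv (x : ℝ) : HasDerivAt (fun y ↦ 1 + y + y ^ 2 / 2 - exp y) (1 + x - exp x) x := by
    refine ((((hasDerivAt_id' x).const_add 1).add ((hasDerivAt_pow 2 x).div_const 2)).sub
      (hasDerivAt_exp x)).congr_deriv ?_
    ring
  have hanti : AntitoneOn (fun y ↦ 1 + y + y ^ 2 / 2 - exp y) (Set.Iic 0) :=
    antitoneOn_of_deriv_nonpos (convex_Iic 0) (by fun_prop)
      (fun x _ ↦ (hderiv x).differentiableAt.differentiableWithinAt)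
      (fun x _ ↦ by rw [(hderiv x).deriv]; linarith [add_one_le_exp x])
  have := hanti hy Set.self_mem_Iic hy
  simp only [exp_zero] at this
  linarith

lemma Real.exp_le_one_add_add_sq_div_one_sub {y : ℝ} (h0 : 0 ≤ y) (h1 : y < 1) :
    exp y ≤ 1 + y + y ^ 2 / (2 * (1 - y)) := by
  have hderiv (x : ℝ) :
      HasDerivAt (fun y ↦ 1 - y ^ 2 / 2 - (1 - y) * exp y) (x * (exp x - 1)) x := by
    refine ((((hasDerivAt_pow 2 x).div_const 2).const_sub 1).sub
      (((hasDerivAt_id' x).const_sub 1).mul (hasDerivAt_exp x))).congr_deriv ?_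
    ring
  have hmono : MonotoneOn (fun y ↦ 1 - y ^ 2 / 2 - (1 - y) * exp y) (Set.Ici 0) :=
    monotoneOn_of_deriv_nonneg (convex_Ici 0) (by fun_prop)
      (fun x _ ↦ (hderiv x).differentiableAt.differentiableWithinAt)
      (fun x hx ↦ by
        rw [interior_Ici, Set.mem_Ioi] at hx
        rw [(hderiv x).deriv]
        nlinarith [add_one_le_exp x])
  have := hmono Set.self_mem_Ici h0 h0
  simp only [exp_zero] at this
  have hy1 : 1 - y ≠ 0 := by linarith
  rw [← sub_nonneg, show 1 + y + y ^ 2 / (2 * (1 - y)) - exp y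
    = (1 - y ^ 2 / 2 - (1 - y) * exp y) / (1 - y) by field_simp; ring]
  exact div_nonneg (by linarith) (by linarith)

lemma Real.exp_mul_le_one_add_mul_add_sq {l K x : ℝ} (hl : 0 ≤ l) (hlK : l * K < 1)
    (hx : |x| ≤ K) :
    exp (l * x) ≤ 1 + l * x + l ^ 2 / (2 * (1 - l * K)) * x ^ 2 := by
  have h1K : 0 < 1 - l * K := by linarith
  have hcoef (a : ℝ) (ha : 1 - l * K ≤ a) :
      (l * x) ^ 2 / (2 * a) ≤ l ^ 2 / (2 * (1 - l * K)) * x ^ 2 := by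
    rw [mul_pow, div_mul_eq_mul_div]
    gcongr
  rcases le_or_gt x 0 with hx0 | hx0
  · have hy : l * x ≤ 0 := mul_nonpos_of_nonneg_of_nonpos hl hx0
    linarith [exp_le_one_add_add_sq_div_two hy, hcoef 1 (by nlinarith [abs_nonneg x])]
  · have hlx : l * x ≤ l * K := mul_le_mul_of_nonneg_left ((le_abs_self x).trans hx) hl
    linarith [exp_le_one_add_add_sq_div_one_sub (by positivity) (hlx.trans_lt hlK),
      hcoef (1 - l * x) (by linarith)]

lemma abs_sub_zero_le_mul_of_abs_succ_sub_le {f : ℕ → ℝ} {K : ℝ}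
    (h : ∀ i, |f (i + 1) - f i| ≤ K) (n : ℕ) : |f n - f 0| ≤ n * K :=
  calc |f n - f 0| = dist (f 0) (f n) := by rw [Real.dist_eq, abs_sub_comm]
    _ ≤ ∑ i ∈ Finset.range n, dist (f i) (f (i + 1)) := dist_le_range_sum_dist f n
    _ ≤ ∑ _i ∈ Finset.range n, K :=
      Finset.sum_le_sum fun i _ ↦ by rw [Real.dist_eq, abs_sub_comm]; exact h i
    _ = n * K := by simp

namespace MeasureTheory

variable {Ω : Type*} {m : MeasurableSpace Ω} {μ : Measure Ω} {ℱ : Filtration ℕ m}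

theorem Supermartingale.condExp_sub_nonpos {X : ℕ → Ω → ℝ} (hX : Supermartingale X ℱ μ)
    {i j : ℕ} (hij : i ≤ j) : μ[X j - X i | ℱ i] ≤ᵐ[μ] 0 := by
  have h := hX.neg.condExp_sub_nonneg hij
  rw [Pi.neg_apply, Pi.neg_apply, neg_sub_neg, ← neg_sub] at h
  filter_upwards [h, condExp_neg (X j - X i) (ℱ i)] with ω h hneg
  rw [hneg] at h
  simpa using h

theorem integrable_exp_mul_of_abs_le [IsFiniteMeasure μ] {D : Ω → ℝ}
    (hD : AEStronglyMeasurable D μ) {K : ℝ} (hDK : ∀ ω, |D ω| ≤ K) (l : ℝ) :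
    Integrable (fun ω ↦ exp (l * D ω)) μ :=
  .of_bound (continuous_exp.comp_aestronglyMeasurable (hD.const_mul l)) (exp (|l| * K))
    (ae_of_all _ fun ω ↦ by
      rw [Real.norm_eq_abs, abs_exp, exp_le_exp]
      calc l * D ω ≤ |l| * |D ω| := (le_abs_self _).trans (abs_mul _ _).le
        _ ≤ |l| * K := mul_le_mul_of_nonneg_left (hDK ω) (abs_nonneg l))

theorem condExp_exp_mul_le [IsFiniteMeasure μ] {m' : MeasurableSpace Ω} (hm : m' ≤ m)
    {D : Ω → ℝ} (hD : StronglyMeasurable[m] D) {K l : ℝ} (hDK : ∀ ω, |D ω| ≤ K) (hl : 0 ≤ l)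
    (hlK : l * K < 1) (hdrift : μ[D | m'] ≤ᵐ[μ] 0) :
    μ[fun ω ↦ exp (l * D ω) | m'] ≤ᵐ[μ]
      fun ω ↦ exp (l ^ 2 / (2 * (1 - l * K)) * μ[fun ω ↦ D ω ^ 2 | m'] ω) := by
  set c := l ^ 2 / (2 * (1 - l * K))
  set W := μ[fun ω ↦ D ω ^ 2 | m']
  have hDint : Integrable D μ := .of_bound hD.aestronglyMeasurable K (ae_of_all _ hDK)
  have hD2int : Integrable (fun ω ↦ D ω ^ 2) μ :=
    .of_bound (hD.pow 2).aestronglyMeasurable (K ^ 2) (ae_of_all _ fun ω ↦ by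
      rw [Real.norm_eq_abs, abs_pow]; exact pow_le_pow_left₀ (abs_nonneg _) (hDK ω) 2)
  have hquad : μ[(fun _ ↦ 1) + l • D + c • fun ω ↦ D ω ^ 2 | m'] =ᵐ[μ]
      fun ω ↦ 1 + l * μ[D | m'] ω + c * W ω := by
    filter_upwards [condExp_add ((integrable_const 1).add (hDint.smul l)) (hD2int.smul c) m',
      condExp_add (integrable_const 1) (hDint.smul l) m', condExp_smul l D m',
      condExp_smul c (fun ω ↦ D ω ^ 2) m'] with ω h h' hl' hc'
    simp only [h, Pi.add_apply, h', hl', hc', condExp_const hm, Pi.smul_apply, smul_eq_mul, W]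
  have hmajor := condExp_mono (m := m') (integrable_exp_mul_of_abs_le hD.aestronglyMeasurable hDK l)
    ((integrable_const 1).add (hDint.smul l) |>.add (hD2int.smul c))
    (ae_of_all _ fun ω ↦ exp_mul_le_one_add_mul_add_sq hl hlK (hDK ω))
  filter_upwards [hmajor, hquad, hdrift] with ω hmajor hquad hdrift
  calc μ[fun ω ↦ exp (l * D ω) | m'] ω ≤ 1 + l * μ[D | m'] ω + c * W ω := hquad ▸ hmajor
    _ ≤ 1 + c * W ω := by linarith [mul_nonpos_of_nonneg_of_nonpos hl hdrift]
    _ ≤ exp (c * W ω) := by linarith [add_one_le_exp (c * W ω)]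

noncomputable def predictableQuadVar (μ : Measure Ω) (ℱ : Filtration ℕ m) (X : ℕ → Ω → ℝ)
    (i : ℕ) (ω : Ω) : ℝ :=
  ∑ j ∈ Finset.range i, (μ[fun ω' ↦ (X (j + 1) ω' - X j ω') ^ 2 | ℱ j]) ω

section predictableQuadVar

variable {X : ℕ → Ω → ℝ}

theorem stronglyMeasurable_predictableQuadVar (i : ℕ) :
    StronglyMeasurable[ℱ i] (predictableQuadVar μ ℱ X i) :=
  Finset.stronglyMeasurable_fun_sum _ fun _ hj ↦
    stronglyMeasurable_condExp.mono (ℱ.mono (Finset.mem_range.1 hj).le)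

theorem ae_predictableQuadVar_nonneg : ∀ᵐ ω ∂μ, ∀ i, 0 ≤ predictableQuadVar μ ℱ X i ω := by
  have h : ∀ᵐ ω ∂μ, ∀ j, 0 ≤ (μ[fun ω' ↦ (X (j + 1) ω' - X j ω') ^ 2 | ℱ j]) ω :=
    ae_all_iff.2 fun j ↦ condExp_nonneg (ae_of_all _ fun _ ↦ sq_nonneg _)
  filter_upwards [h] with ω h i using Finset.sum_nonneg fun j _ ↦ h j

end predictableQuadVar

noncomputable def freedmanExp (μ : Measure Ω) (ℱ : Filtration ℕ m) (X : ℕ → Ω → ℝ) (l c : ℝ)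
    (i : ℕ) (ω : Ω) : ℝ :=
  exp (l * (X i ω - X 0 ω) - c * predictableQuadVar μ ℱ X i ω)

section freedmanExp

variable {X : ℕ → Ω → ℝ} {l c : ℝ}

@[simp]
theorem freedmanExp_zero : freedmanExp μ ℱ X l c 0 = 1 := by
  ext ω; simp [freedmanExp, predictableQuadVar]

theorem freedmanExp_succ (i : ℕ) :
    freedmanExp μ ℱ X l c (i + 1) = freedmanExp μ ℱ X l c i *
      (fun ω ↦ exp (-(c * μ[fun ω' ↦ (X (i + 1) ω' - X i ω') ^ 2 | ℱ i] ω))) *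
      fun ω ↦ exp (l * (X (i + 1) ω - X i ω)) := by
  ext ω
  simp only [freedmanExp, predictableQuadVar, Finset.sum_range_succ, Pi.mul_apply, ← exp_add]
  ring_nf

theorem StronglyAdapted.freedmanExp (hX : StronglyAdapted ℱ X) :
    StronglyAdapted ℱ (freedmanExp μ ℱ X l c) := fun i ↦
  continuous_exp.comp_stronglyMeasurable
    ((((hX i).sub ((hX 0).mono (ℱ.mono i.zero_le))).const_mul l).sub
      (stronglyMeasurable_predictableQuadVar i |>.const_mul c))

theorem integrable_freedmanExp [IsFiniteMeasure μ] (hX : StronglyAdapted ℱ X) {K : ℝ}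
    (hK : ∀ i ω, |X (i + 1) ω - X i ω| ≤ K) (hl : 0 ≤ l) (hc : 0 ≤ c) (i : ℕ) :
    Integrable (freedmanExp μ ℱ X l c i) μ := by
  refine .of_bound ((hX.freedmanExp i).mono (ℱ.le i)).aestronglyMeasurable
    (exp (l * (i * K))) ?_
  filter_upwards [ae_predictableQuadVar_nonneg] with ω hW
  rw [Real.norm_eq_abs, freedmanExp, abs_exp, exp_le_exp]
  have hXi : l * (X i ω - X 0 ω) ≤ l * (i * K) := mul_le_mul_of_nonneg_left
    ((le_abs_self _).trans (abs_sub_zero_le_mul_of_abs_succ_sub_le (f := (X · ω))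
      (fun j ↦ hK j ω) i)) hl
  nlinarith [mul_nonneg hc (hW i)]

theorem supermartingale_freedmanExp [IsFiniteMeasure μ] (hX : Supermartingale X ℱ μ) {K : ℝ}
    (hK : ∀ i ω, |X (i + 1) ω - X i ω| ≤ K) (hl : 0 ≤ l) (hlK : l * K < 1) :
    Supermartingale (freedmanExp μ ℱ X l (l ^ 2 / (2 * (1 - l * K)))) ℱ μ := by
  set c := l ^ 2 / (2 * (1 - l * K))
  have hc : 0 ≤ c := div_nonneg (sq_nonneg l) (by linarith)
  have hint := integrable_freedmanExp (μ := μ) hX.stronglyAdapted hK hl hc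
  refine supermartingale_nat hX.stronglyAdapted.freedmanExp hint fun i ↦ ?_
  set W := μ[fun ω' ↦ (X (i + 1) ω' - X i ω') ^ 2 | ℱ i]
  set g := freedmanExp μ ℱ X l c i * fun ω ↦ exp (-(c * W ω))
  have hg : StronglyMeasurable[ℱ i] g := (hX.stronglyAdapted.freedmanExp i).mul
    (continuous_exp.comp_stronglyMeasurable (stronglyMeasurable_condExp.const_mul c).neg)
  have hΔ : StronglyMeasurable fun ω ↦ X (i + 1) ω - X i ω :=
    ((hX.stronglyMeasurable (i + 1)).mono (ℱ.le _)).sub ((hX.stronglyMeasurable i).mono (ℱ.le _))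
  have hexp := condExp_exp_mul_le (ℱ.le i) hΔ (hK i) hl hlK (hX.condExp_sub_nonpos i.le_succ)
  have hint' := hint (i + 1)
  rw [freedmanExp_succ] at hint' ⊢
  filter_upwards [condExp_mul_of_stronglyMeasurable_left hg hint'
    (integrable_exp_mul_of_abs_le hΔ.aestronglyMeasurable (hK i) l), hexp] with ω hpull hexp
  rw [hpull, Pi.mul_apply]
  calc g ω * _ ≤ g ω * exp (c * W ω) :=
        mul_le_mul_of_nonneg_left hexp (mul_pos (exp_pos _) (exp_pos _)).le
    _ = freedmanExp μ ℱ X l c i ω := by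
      simp only [g, Pi.mul_apply, mul_assoc, ← exp_add, neg_add_cancel, exp_zero, mul_one]

end freedmanExp

section Ville

variable [IsFiniteMeasure μ] {Z : ℕ → Ω → ℝ}

theorem Supermartingale.mul_measureReal_exists_le_le_integral (hZ : Supermartingale Z ℱ μ)
    (hnonneg : 0 ≤ Z) (ε : ℝ) (n : ℕ) :
    ε * μ.real {ω | ∃ k ≤ n, ε ≤ Z k ω} ≤ ∫ ω, Z 0 ω ∂μ := by
  set A := {ω | ∃ k ≤ n, ε ≤ Z k ω}
  have hA : MeasurableSet A := by
    rw [show A = ⋃ k ≤ n, {ω | ε ≤ Z k ω} by ext; simp [A]]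
    exact .biUnion (Set.to_countable _) fun k _ ↦
      measurableSet_le measurable_const ((hZ.stronglyMeasurable k).measurable.mono (ℱ.le k) le_rfl)
  set τ : Ω → WithTop ℕ := fun ω ↦ (hittingBtwn Z (Set.Ici ε) 0 n ω : ℕ)
  have hτ : IsStoppingTime ℱ τ :=
    hZ.stronglyAdapted.adapted.isStoppingTime_hittingBtwn measurableSet_Ici
  have hτn (ω : Ω) : τ ω ≤ n := WithTop.coe_le_coe.2 (hittingBtwn_le ω)
  have hint : Integrable (stoppedValue Z τ) μ := by
    rw [show stoppedValue Z τ = -stoppedValue (-Z) τ by ext; simp [stoppedValue]]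
    exact (hZ.neg.integrable_stoppedValue hτ hτn).neg
  have hε (ω : Ω) (hω : ω ∈ A) : ε ≤ stoppedValue Z τ ω := by
    obtain ⟨k, hkn, hk⟩ := hω
    exact stoppedValue_hittingBtwn_mem ⟨k, ⟨k.zero_le, hkn⟩, hk⟩
  have hoptional : ∫ ω, stoppedValue Z τ ω ∂μ ≤ ∫ ω, Z 0 ω ∂μ := by
    have h := hZ.neg.expected_stoppedValue_mono (isStoppingTime_const ℱ 0) hτ
      (fun ω ↦ WithTop.coe_le_coe.2 (Nat.zero_le _)) hτn
    simpa [stoppedValue, integral_neg] using h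
  calc ε * μ.real A ≤ ∫ ω in A, stoppedValue Z τ ω ∂μ := by
        simpa [mul_comm] using
          setIntegral_ge_of_const_le hA (measure_ne_top μ A) hε hint.integrableOn
    _ ≤ ∫ ω, stoppedValue Z τ ω ∂μ :=
        setIntegral_le_integral hint (ae_of_all _ fun ω ↦ hnonneg _ ω)
    _ ≤ ∫ ω, Z 0 ω ∂μ := hoptional

/-- Ville's maximal inequality. -/
theorem Supermartingale.measure_exists_le_le (hZ : Supermartingale Z ℱ μ) (hnonneg : 0 ≤ Z)
    {ε : ℝ} (hε : 0 < ε) :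
    μ {ω | ∃ i, ε ≤ Z i ω} ≤ ENNReal.ofReal ((∫ ω, Z 0 ω ∂μ) / ε) := by
  have hunion : {ω | ∃ i, ε ≤ Z i ω} = ⋃ n, {ω | ∃ k ≤ n, ε ≤ Z k ω} := by
    ext ω
    simp only [Set.mem_ofPred_eq, Set.mem_iUnion]
    exact ⟨fun ⟨i, h⟩ ↦ ⟨i, i, le_rfl, h⟩, fun ⟨_, i, _, h⟩ ↦ ⟨i, h⟩⟩
  have hmono : Monotone fun n ↦ {ω | ∃ k ≤ n, ε ≤ Z k ω} :=
    fun _ _ hmn _ ⟨k, hk, h⟩ ↦ ⟨k, hk.trans hmn, h⟩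
  rw [hunion, hmono.measure_iUnion]
  refine iSup_le fun n ↦ ?_
  rw [ENNReal.le_ofReal_iff_toReal_le (measure_ne_top _ _)
    (div_nonneg (integral_nonneg (hnonneg 0)) hε.le), le_div_iff₀ hε, mul_comm]
  exact hZ.mul_measureReal_exists_le_le_integral hnonneg ε n

end Ville

end MeasureTheory

-- `end MeasureTheory` also deactivated the scoped notation `μ[f | m]`.
open MeasureTheory

/-- Freedman's inequality for supermartingales: if `|ΔX(i)| ≤ K` for all `i` and
`V(i) = Σ_{j<i} E[(ΔX(j))² | F(j)]`, then for all `t, v > 0`,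
`P(∃ i, X(i) ≥ X(0) + t and V(i) ≤ v) ≤ exp(-t²/(2(v + Kt)))`. -/
theorem freedman_inequality {Ω : Type*} {m : MeasurableSpace Ω}
    {μ : Measure Ω} [IsProbabilityMeasure μ]
    (ℱ : Filtration ℕ m) (X : ℕ → Ω → ℝ) (hX : Supermartingale X ℱ μ)
    (K : ℝ) (hK : ∀ i ω, |X (i + 1) ω - X i ω| ≤ K)
    (t v : ℝ) (ht : 0 < t) (hv : 0 < v) :
    μ {ω | ∃ i : ℕ, X 0 ω + t ≤ X i ω ∧
        (∑ j ∈ Finset.range i,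
          (μ[fun ω' => (X (j + 1) ω' - X j ω') ^ 2 | ℱ j]) ω) ≤ v}
      ≤ ENNReal.ofReal (Real.exp (-t ^ 2 / (2 * (v + K * t)))) := by
  obtain ⟨ω₀⟩ := nonempty_of_isProbabilityMeasure μ
  have hvKt : 0 < v + K * t := by nlinarith [(abs_nonneg _).trans (hK 0 ω₀)]
  set l := t / (v + K * t)
  have hl : 0 ≤ l := by positivity
  have hlK : 1 - l * K = v / (v + K * t) := by
    rw [eq_div_iff hvKt.ne', sub_mul, div_mul_eq_mul_div, div_mul_cancel₀ _ hvKt.ne']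
    ring
  set c := l ^ 2 / (2 * (1 - l * K))
  have hc : 0 ≤ c := div_nonneg (sq_nonneg l) (by rw [hlK]; positivity)
  have hexponent : l * t - c * v = t ^ 2 / (2 * (v + K * t)) := by
    simp only [c, hlK, l]; field_simp; ring
  calc _ ≤ μ {ω | ∃ i, exp (l * t - c * v) ≤ freedmanExp μ ℱ X l c i ω} := by
        refine measure_mono fun ω ⟨i, hXi, hVi⟩ ↦ ⟨i, exp_le_exp.2 ?_⟩
        have : c * predictableQuadVar μ ℱ X i ω ≤ c * v := mul_le_mul_of_nonneg_left hVi hc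
        nlinarith
    _ ≤ ENNReal.ofReal ((∫ ω, freedmanExp μ ℱ X l c 0 ω ∂μ) / exp (l * t - c * v)) :=
        (supermartingale_freedmanExp hX hK hl (by linarith [div_pos hv hvKt])).measure_exists_le_le
          (fun _ _ ↦ (exp_pos _).le) (exp_pos _)
    _ = _ := by simp [hexponent, ← exp_neg, neg_div]
end
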